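/- arXiv:2508.03335 — 6 statements merged into one kernel-verified Lean document; each statement's English description precedes it below -/
import Mathlib

section
/- For every integer k ≥ 1 there exist a constant c > 0 and an integer N such that for every integer n ≥ N, every graph U that contains every graph with n vertices and treewidth at most k satisfies |E(U)| ≥ c·k·n·(ln n). -/
open SimpleGraph

def Contains {V W : Type*} (U : SimpleGraph V) (G : SimpleGraph W) : Prop :=
  ∃ f : G →g U, Function.Injective f

def IsWSubtree {V : Type*} (F : SimpleGraph V) (W : Set V) (H : F.Subgraph) : Prop :=
  H.coe.IsTree ∧ (∀ w ∈ W, (H.neighborSet w).Subsingleton) ∧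
    ∀ H' : F.Subgraph, H ≤ H' → H'.coe.IsTree →
      (∀ w ∈ W, (H'.neighborSet w).Subsingleton) → H' = H

noncomputable def ratio (w : ℕ) : ℝ := (2 + (2/3 : ℝ) ^ w) / (1 + (2/3 : ℝ) ^ w)
noncomputable def alphaF (w p : ℕ) : ℝ := (1 / (1 + (2/3 : ℝ) ^ w)) * ratio w ^ (p - 1)
noncomputable def betaF (w : ℕ) : ℝ := 3 * (3/2 : ℝ) ^ w
noncomputable def gammaF (w p : ℕ) : ℝ := ratio w ^ p
noncomputable def deltaF (w : ℕ) : ℝ := (2 + (2/3 : ℝ) ^ w) * betaF w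
noncomputable def pW (w : ℕ) : ℕ := sInf {p : ℕ | betaF w ≤ alphaF w (p + 1)}

noncomputable def betaK (k w : ℕ) : ℝ := (2 * k + 4) * (3/2 : ℝ) ^ w
noncomputable def deltaK (k w : ℕ) : ℝ := (2 + (2/3 : ℝ) ^ w) * betaK k w
noncomputable def pWK (k w : ℕ) : ℕ := sInf {p : ℕ | betaK k w ≤ alphaF w (p + 1)}

def JVert (a b : ℕ) : ℕ → Type
  | 0 => Fin b
  | m + 1 => Fin a ⊕ (JVert a b m ⊕ JVert a b m)

def JGraph (a b : ℕ) : (m : ℕ) → SimpleGraph (JVert a b m)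
  | 0 => ⊤
  | m + 1 => SimpleGraph.fromRel (fun u v =>
      match u, v with
      | Sum.inl _, _ => True
      | Sum.inr (Sum.inl x), Sum.inr (Sum.inl y) => (JGraph a b m).Adj x y
      | Sum.inr (Sum.inr x), Sum.inr (Sum.inr y) => (JGraph a b m).Adj x y
      | _, _ => False)

noncomputable def GwpVert (w p : ℕ) : Type := JVert (w + 1) ⌈deltaF w⌉₊ (p - pW w)
noncomputable def Gwp (w p : ℕ) : SimpleGraph (GwpVert w p) := JGraph _ _ _

noncomputable def GkwpVert (k w p : ℕ) : Type := JVert ((k + 1) * (w + 1)) ⌈deltaK k w⌉₊ (p - pWK k w)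
noncomputable def Gkwp (k w p : ℕ) : SimpleGraph (GkwpVert k w p) := JGraph _ _ _

structure TreeDecomp {V : Type*} {ι : Type*} (G : SimpleGraph V) (T : SimpleGraph ι) where
  isTree : T.IsTree
  bag : ι → Set V
  bag_connected : ∀ v : V, (T.induce {x | v ∈ bag x}).Connected
  bag_edge : ∀ ⦃u v : V⦄, G.Adj u v → ∃ x, u ∈ bag x ∧ v ∈ bag x

def HasTreewidthLE {V : Type*} (G : SimpleGraph V) (k : ℕ) : Prop :=
  ∃ (ι : Type) (T : SimpleGraph ι) (td : TreeDecomp G T), ∀ x, (td.bag x).ncard ≤ k + 1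

open SimpleGraph

def parentGraph {n : ℕ} (par : Fin n → Fin n) : SimpleGraph (Fin n) :=
  SimpleGraph.fromRel (fun x y => par x = y)

lemma parentGraph_adj {n : ℕ} (par : Fin n → Fin n) (u v : Fin n) :
    (parentGraph par).Adj u v ↔ u ≠ v ∧ (par u = v ∨ par v = u) := by
  simp [parentGraph, eq_comm]

section tree
variable {n : ℕ} {par : Fin n → Fin n} (hlt : ∀ x : Fin n, 0 < x.val → (par x).val < x.val)
  (h0 : ∀ x : Fin n, x.val = 0 → par x = x)

include hlt h0

lemma parent_le (x : Fin n) : (par x).val ≤ x.val := by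
  rcases Nat.eq_zero_or_pos x.val with h | h
  · rw [h0 x h]
  · exact (hlt x h).le

lemma parent_unique {x y : Fin n} (h : (parentGraph par).Adj x y) (hyx : y.val < x.val) :
    par x = y := by
  rw [parentGraph_adj] at h
  rcases h.2 with h2 | h2
  · exact h2
  · have := parent_le hlt h0 y
    rw [h2] at this
    omega

omit h0 in
lemma parentGraph_preconnected (z : Fin n) (hz : z.val = 0) :
    ∀ x : Fin n, (parentGraph par).Reachable x z := by
  have key : ∀ m : ℕ, ∀ x : Fin n, x.val ≤ m → (parentGraph par).Reachable x z := by
    intro m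
    induction m with
    | zero =>
      intro x hx
      have : x = z := by ext; omega
      rw [this]
    | succ m ih =>
      intro x hx
      rcases Nat.eq_zero_or_pos x.val with h | h
      · have : x = z := by ext; omega
        rw [this]
      · have hplt := hlt x h
        have hadj : (parentGraph par).Adj x (par x) := by
          rw [parentGraph_adj]
          refine ⟨?_, Or.inl rfl⟩
          intro he; rw [← he] at hplt; omega
        exact hadj.reachable.trans (ih (par x) (by omega))
  exact fun x => key x.val x le_rfl

lemma no_cycle_aux (x : Fin n) (c : (parentGraph par).Walk x x) (hc : c.IsCycle)
    (hmax : ∀ y ∈ c.support, y.val ≤ x.val) : False := by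
  cases c with
  | nil => exact Walk.IsCycle.not_of_nil hc
  | @cons _ y _ h q =>
    rw [Walk.cons_isCycle_iff] at hc
    cases q with
    | nil => exact (parentGraph par).irrefl h
    | @cons _ z' _ h2 q2 =>
      obtain ⟨z, q', h', heq⟩ := Walk.exists_cons_eq_concat h2 q2
      have hedge : s(z, x) ∈ (Walk.cons h2 q2).edges := by
        rw [heq, Walk.edges_concat]
        simp
      have hzsupp : z ∈ (Walk.cons h2 q2).support :=
        Walk.fst_mem_support_of_mem_edges _ hedge
      have hzle : z.val ≤ x.val := hmax z (by rw [Walk.support_cons]; exact List.mem_cons_of_mem _ hzsupp)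
      have hyle : y.val ≤ x.val := hmax y (by
        rw [Walk.support_cons]
        exact List.mem_cons_of_mem _ (Walk.start_mem_support _))
      have hzlt : z.val < x.val := lt_of_le_of_ne hzle (fun hv => h'.ne (Fin.ext hv))
      have hylt : y.val < x.val := lt_of_le_of_ne hyle (fun hv => h.ne' (Fin.ext hv))
      have hy : par x = y := parent_unique hlt h0 h hylt
      have hz : par x = z := parent_unique hlt h0 h'.symm hzlt
      apply hc.2
      have : s(x, y) = s(z, x) := by rw [← hy, hz]; exact Sym2.eq_swap
      rw [this]
      exact hedge

lemma parentGraph_isTree (hn : 0 < n) : (parentGraph par).IsTree := by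
  have : Nonempty (Fin n) := ⟨⟨0, hn⟩⟩
  constructor
  · constructor
    intro x y
    exact ((parentGraph_preconnected hlt ⟨0, hn⟩ rfl) x).trans
      ((parentGraph_preconnected hlt ⟨0, hn⟩ rfl) y).symm
  · intro v c hc
    classical
    obtain ⟨x, hxmem, hxmax⟩ : ∃ x ∈ c.support, ∀ y ∈ c.support, y.val ≤ x.val := by
      obtain ⟨x, hx1, hx2⟩ := c.support.toFinset.exists_max_image (fun y => y.val)
        ⟨v, by simp⟩
      exact ⟨x, List.mem_toFinset.mp hx1, fun y hy => hx2 y (List.mem_toFinset.mpr hy)⟩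
    apply no_cycle_aux hlt h0 x (c.rotate x hxmem) (hc.rotate hxmem)
    intro y hy
    rw [Walk.mem_support_iff] at hy
    rcases hy with rfl | hy
    · exact le_rfl
    · exact hxmax y (List.mem_of_mem_tail
        (((c.support_rotate x hxmem).perm.mem_iff).mp hy))
end tree


open SimpleGraph

/-- disjoint union of ⌊n/s⌋ stars on `s` vertices each (center = multiples of `s`). -/
def starForest (n s : ℕ) : SimpleGraph (Fin n) :=
  SimpleGraph.fromRel (fun u v =>
    u.val % s = 0 ∧ u.val / s = v.val / s ∧ v.val < (n / s) * s)

lemma starForest_adj {n s : ℕ} {u v : Fin n} :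
    (starForest n s).Adj u v ↔ u ≠ v ∧
      ((u.val % s = 0 ∧ u.val / s = v.val / s ∧ v.val < (n / s) * s) ∨
       (v.val % s = 0 ∧ v.val / s = u.val / s ∧ u.val < (n / s) * s)) := by
  simp [starForest]

def sfPar (n s : ℕ) : Fin n → Fin n := fun x =>
  if x.val % s ≠ 0 ∧ x.val < (n / s) * s then
    ⟨x.val / s * s, lt_of_le_of_lt (Nat.div_mul_le_self _ _) x.isLt⟩
  else
    ⟨x.val - 1, lt_of_le_of_lt (Nat.sub_le _ _) x.isLt⟩

lemma sfPar_lt {n s : ℕ} (x : Fin n) (hx : 0 < x.val) : ((sfPar n s) x).val < x.val := by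
  unfold sfPar
  split
  · rename_i h
    have h1 := Nat.div_add_mod' x.val s
    simp only []
    omega
  · simp only []
    omega

lemma sfPar_zero {n s : ℕ} (x : Fin n) (hx : x.val = 0) : (sfPar n s) x = x := by
  unfold sfPar
  rw [if_neg]
  · ext; simp [hx]
  · rw [hx]
    simp [Nat.zero_mod]

/-- general connectivity helper -/
lemma induce_connected_of_center {V : Type*} (G : SimpleGraph V) (S : Set V) (v : V)
    (hv : v ∈ S) (h : ∀ x ∈ S, x = v ∨ G.Adj v x) : (G.induce S).Connected := by
  have hne : Nonempty S := ⟨⟨v, hv⟩⟩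
  constructor
  have key : ∀ x : S, (G.induce S).Reachable x ⟨v, hv⟩ := by
    rintro ⟨x, hx⟩
    rcases h x hx with rfl | hadj
    · rfl
    · have : (G.induce S).Adj ⟨x, hx⟩ ⟨v, hv⟩ := by
        simp only [comap_adj, Function.Embedding.coe_subtype]
        exact hadj.symm
      exact this.reachable
  intro a b
  exact (key a).trans (key b).symm

lemma starForest_treewidth (n s k : ℕ) (hs : 2 ≤ s) (hn : 0 < n) (hk : 1 ≤ k) :
    HasTreewidthLE (starForest n s) k := by
  refine ⟨Fin n, parentGraph (sfPar n s),
    ⟨parentGraph_isTree sfPar_lt sfPar_zero hn, fun x => {x, sfPar n s x}, ?_, ?_⟩, ?_⟩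
  · -- bag_connected
    intro v
    apply induce_connected_of_center _ _ v
    · left; rfl
    · rintro x hx
      simp only [Set.mem_setOf_eq, Set.mem_insert_iff, Set.mem_singleton_iff] at hx
      rcases hx with rfl | hpx
      · exact Or.inl rfl
      · by_cases hxv : x = v
        · exact Or.inl hxv
        · right
          rw [parentGraph_adj]
          exact ⟨Ne.symm hxv, Or.inr hpx.symm⟩
  · -- bag_edge
    intro u v huv
    rw [starForest_adj] at huv
    obtain ⟨hne, h | h⟩ := huv
    · -- u center, v leaf: take bag of v
      refine ⟨v, ?_, Or.inl rfl⟩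
      right
      obtain ⟨hm, hd, hlt⟩ := h
      have hvm : v.val % s ≠ 0 := by
        intro hvm
        apply hne
        ext
        have h1 := Nat.div_add_mod' u.val s
        have h2 := Nat.div_add_mod' v.val s
        have h3 : u.val / s * s = v.val / s * s := by rw [hd]
        omega
      show u ∈ ({(sfPar n s) v} : Set (Fin n))
      have : (sfPar n s) v = u := by
        unfold sfPar
        rw [if_pos ⟨hvm, hlt⟩]
        ext
        simp only []
        have h1 := Nat.div_add_mod' u.val s
        have h3 : u.val / s * s = v.val / s * s := by rw [hd]
        omega
      rw [this]; rfl
    · refine ⟨u, Or.inl rfl, ?_⟩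
      right
      obtain ⟨hm, hd, hlt⟩ := h
      have hvm : u.val % s ≠ 0 := by
        intro hvm
        apply hne
        ext
        have h1 := Nat.div_add_mod' u.val s
        have h2 := Nat.div_add_mod' v.val s
        have h3 : u.val / s * s = v.val / s * s := by rw [hd]
        omega
      show v ∈ ({(sfPar n s) u} : Set (Fin n))
      have : (sfPar n s) u = v := by
        unfold sfPar
        rw [if_pos ⟨hvm, hlt⟩]
        ext
        simp only []
        have h2 := Nat.div_add_mod' v.val s
        have h3 : u.val / s * s = v.val / s * s := by rw [hd]
        omega
      rw [this]; rfl
  · -- bag sizes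
    intro x
    calc ({x, sfPar n s x} : Set (Fin n)).ncard ≤ ({sfPar n s x} : Set (Fin n)).ncard + 1 :=
          Set.ncard_insert_le _ _
      _ ≤ 1 + 1 := by rw [Set.ncard_singleton]
      _ ≤ k + 1 := by omega


open SimpleGraph Finset

lemma block_lt {n s i j : ℕ} (hi : i < n / s) (hj : j < s) : i * s + j < (n / s) * s := by
  have h1 : (i + 1) * s ≤ (n / s) * s := Nat.mul_le_mul_right _ (by omega)
  have h3 : (i + 1) * s = i * s + s := by ring
  omega

lemma many_high_degree {n s : ℕ} (hs : 2 ≤ s) {V : Type} [Fintype V] (U : SimpleGraph V)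
    [DecidableRel U.Adj] (h : Contains U (starForest n s)) :
    n / s ≤ (Finset.univ.filter (fun v => s - 1 ≤ U.degree v)).card := by
  obtain ⟨f, hf⟩ := h
  have hspos : 0 < s := by omega
  have hms : (n / s) * s ≤ n := Nat.div_mul_le_self _ _
  have hblk : ∀ i j : ℕ, i < n / s → j < s → i * s + j < n :=
    fun i j hi hj => lt_of_lt_of_le (block_lt hi hj) hms
  have hcentlt : ∀ i : ℕ, i < n / s → i * s < n := by
    intro i hi
    have := hblk i 0 hi (by omega)
    omega
  classical
  have key : ∀ i : ℕ, ∀ hi : i < n / s, s - 1 ≤ U.degree (f ⟨i * s, hcentlt i hi⟩) := by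
    intro i hi
    rw [← SimpleGraph.card_neighborFinset_eq_degree]
    have : ((Finset.Icc 1 (s-1)).attach).card ≤
        (U.neighborFinset (f ⟨i * s, hcentlt i hi⟩)).card := by
      apply Finset.card_le_card_of_injOn
        (fun j => f ⟨i * s + j.val, hblk i j.val hi (by
          have := j.property; simp only [Finset.mem_Icc] at this; omega)⟩)
      · rintro ⟨j, hj⟩ -
        dsimp only
        simp only [Finset.mem_Icc] at hj
        rw [Finset.mem_coe, SimpleGraph.mem_neighborFinset]
        apply f.map_adj
        constructor
        · intro he
          have := congrArg Fin.val he
          simp only at this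
          omega
        · left
          refine ⟨by simp [Nat.mul_mod_left], ?_, ?_⟩
          · have h1 : (i * s + j) / s = i := by
              rw [show i * s + j = j + i * s by ring,
                Nat.add_mul_div_right _ _ hspos, Nat.div_eq_of_lt (by omega)]
              omega
            have h2 : (i * s) / s = i := Nat.mul_div_cancel _ hspos
            rw [h1, h2]
          · exact block_lt hi (by omega)
      · rintro ⟨a, ha⟩ - ⟨b, hb⟩ - hab
        dsimp only at hab
        simp only [Finset.mem_Icc] at ha hb
        have := congrArg Fin.val (hf hab)
        simp only at this
        ext
        dsimp only
        omega
    calc s - 1 = ((Finset.Icc 1 (s-1)).attach).card := by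
          rw [Finset.card_attach, Nat.card_Icc]; omega
      _ ≤ _ := this
  have : Finset.card (Finset.univ : Finset (Fin (n/s))) ≤
      (Finset.univ.filter (fun v => s - 1 ≤ U.degree v)).card := by
    apply Finset.card_le_card_of_injOn (fun i => f ⟨i.val * s, hcentlt i.val i.isLt⟩)
    · intro i _
      simp only [Finset.mem_coe, Finset.mem_filter, Finset.mem_univ, true_and]
      exact key i.val i.isLt
    · intro a _ b _ hab
      have h2 := congrArg Fin.val (hf hab)
      simp only at h2
      ext
      exact Nat.eq_of_mul_eq_mul_right hspos h2
  simpa using this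


open SimpleGraph Finset

lemma sum_buckets {V : Type} [Fintype V] (U : SimpleGraph V) [DecidableRel U.Adj] (n : ℕ) :
    ∑ d ∈ Finset.range (n-1), (Finset.univ.filter (fun v => d + 1 ≤ U.degree v)).card
      ≤ 2 * U.edgeSet.ncard := by
  classical
  calc ∑ d ∈ Finset.range (n-1), (Finset.univ.filter (fun v => d + 1 ≤ U.degree v)).card
      = ∑ d ∈ Finset.range (n-1), ∑ v : V, (if d + 1 ≤ U.degree v then 1 else 0) := by
        simp only [Finset.card_filter]
    _ = ∑ v : V, ∑ d ∈ Finset.range (n-1), (if d + 1 ≤ U.degree v then 1 else 0) :=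
        Finset.sum_comm
    _ = ∑ v : V, ((Finset.range (n-1)).filter (fun d => d + 1 ≤ U.degree v)).card := by
        simp only [Finset.card_filter]
    _ ≤ ∑ v : V, U.degree v := by
        apply Finset.sum_le_sum
        intro v _
        calc ((Finset.range (n-1)).filter (fun d => d + 1 ≤ U.degree v)).card
            ≤ (Finset.range (U.degree v)).card := by
              apply Finset.card_le_card
              intro d hd
              simp only [Finset.mem_filter, Finset.mem_range] at hd ⊢
              omega
          _ = U.degree v := Finset.card_range _
    _ = 2 * U.edgeSet.ncard := by
        rw [U.sum_degrees_eq_twice_card_edges]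
        congr 1
        rw [← Set.ncard_coe_finset, coe_edgeFinset]

lemma harmonic_part (n : ℕ) (hn : 1 ≤ n) :
    Real.log n - 1 ≤ ∑ d ∈ Finset.range (n-1), ((d : ℝ) + 2)⁻¹ := by
  obtain ⟨m, rfl⟩ : ∃ m, n = m + 1 := ⟨n-1, by omega⟩
  simp only [Nat.add_sub_cancel]
  have hS : ∑ i ∈ Finset.range (m+1), ((i : ℝ) + 1)⁻¹
      = (∑ d ∈ Finset.range m, ((d : ℝ) + 2)⁻¹) + 1 := by
    rw [Finset.sum_range_succ']
    congr 1
    · apply Finset.sum_congr rfl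
      intro i _
      push_cast
      ring_nf
    · norm_num
  have hH : Real.log ((m : ℝ) + 1 + 1) ≤ ∑ i ∈ Finset.range (m+1), ((i : ℝ) + 1)⁻¹ := by
    have h2 := log_add_one_le_harmonic (m+1)
    have hcast : ((harmonic (m+1) : ℚ) : ℝ) = ∑ i ∈ Finset.range (m+1), ((i : ℝ) + 1)⁻¹ := by
      rw [harmonic]
      push_cast
      rfl
    rw [hcast] at h2
    convert h2 using 2
    push_cast
    ring
  have hlog : Real.log ((m : ℝ) + 1) ≤ Real.log ((m : ℝ) + 1 + 1) :=
    Real.log_le_log (by positivity) (by linarith)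
  push_cast
  linarith [hS ▸ hH]


theorem statement_10 (k : ℕ) (hk : 1 ≤ k) :
    ∃ c : ℝ, 0 < c ∧ ∃ N : ℕ, ∀ n : ℕ, N ≤ n →
      ∀ (V : Type) [Fintype V] (U : SimpleGraph V),
        (∀ G : SimpleGraph (Fin n), HasTreewidthLE G k → Contains U G) →
        c * k * n * Real.log n ≤ (U.edgeSet.ncard : ℝ) := by
  have hkpos : (0:ℝ) < (k:ℝ) := by exact_mod_cast Nat.lt_of_lt_of_le Nat.zero_lt_one hk
  refine ⟨1 / (4 * k), by positivity, 55, ?_⟩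
  intro n hn V _ U hU
  classical
  have hn1 : 1 ≤ n := by omega
  -- natural number inequality
  have hd : ∀ d ∈ Finset.range (n-1), n / (d+2) ≤
      (Finset.univ.filter (fun v => d + 1 ≤ U.degree v)).card := by
    intro d _
    exact many_high_degree (n := n) (s := d+2) (by omega) U
      (hU (starForest n (d+2)) (starForest_treewidth n (d+2) k (by omega) (by omega) hk))
  have hnat : ∑ d ∈ Finset.range (n-1), n / (d+2) ≤ 2 * U.edgeSet.ncard :=
    le_trans (Finset.sum_le_sum hd) (sum_buckets U n)
  -- move to ℝ
  have hfloor : ∀ d ∈ Finset.range (n-1), (n:ℝ)/((d:ℝ)+2) - 1 ≤ ((n / (d+2) : ℕ) : ℝ) := by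
    intro d _
    have h1 : (d+2) * (n/(d+2)) + n % (d+2) = n := Nat.div_add_mod n (d+2)
    have h2 : n % (d+2) < d+2 := Nat.mod_lt _ (by omega)
    have h1' : ((d:ℝ)+2) * ((n/(d+2) : ℕ):ℝ) + ((n % (d+2) : ℕ):ℝ) = (n:ℝ) := by
      exact_mod_cast h1
    have h2' : ((n % (d+2) : ℕ):ℝ) < (d:ℝ)+2 := by exact_mod_cast h2
    rw [sub_le_iff_le_add, div_le_iff₀ (by positivity)]
    nlinarith
  have hreal : ∑ d ∈ Finset.range (n-1), ((n:ℝ)/((d:ℝ)+2) - 1) ≤ 2 * (U.edgeSet.ncard : ℝ) := by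
    calc ∑ d ∈ Finset.range (n-1), ((n:ℝ)/((d:ℝ)+2) - 1)
        ≤ ∑ d ∈ Finset.range (n-1), ((n / (d+2) : ℕ) : ℝ) := Finset.sum_le_sum hfloor
      _ = ((∑ d ∈ Finset.range (n-1), n / (d+2) : ℕ) : ℝ) := by push_cast; rfl
      _ ≤ 2 * (U.edgeSet.ncard : ℝ) := by exact_mod_cast hnat
  -- sum identity
  have hsum : ∑ d ∈ Finset.range (n-1), ((n:ℝ)/((d:ℝ)+2) - 1)
      = (n:ℝ) * (∑ d ∈ Finset.range (n-1), ((d:ℝ)+2)⁻¹) - ((n:ℝ) - 1) := by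
    have hfirst : ∑ d ∈ Finset.range (n-1), ((n:ℝ)/((d:ℝ)+2))
        = (n:ℝ) * (∑ d ∈ Finset.range (n-1), ((d:ℝ)+2)⁻¹) := by
      rw [Finset.mul_sum]
      exact Finset.sum_congr rfl fun d _ => div_eq_mul_inv _ _
    rw [Finset.sum_sub_distrib, hfirst, Finset.sum_const, Finset.card_range, nsmul_eq_mul,
      mul_one, Nat.cast_sub hn1, Nat.cast_one]
  have hharm := harmonic_part n hn1
  -- log n ≥ 4
  have h55 : (55:ℝ) ≤ (n:ℝ) := by exact_mod_cast hn
  have hlog4 : (4:ℝ) ≤ Real.log n := by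
    rw [Real.le_log_iff_exp_le (by linarith)]
    have he := Real.exp_one_lt_d9
    have h4 : Real.exp (4:ℝ) = Real.exp 1 ^ (4:ℕ) := by
      rw [← Real.exp_nat_mul]; norm_num
    have hpow : Real.exp 1 ^ (4:ℕ) < 2.7182818286 ^ (4:ℕ) :=
      pow_lt_pow_left₀ he (Real.exp_pos 1).le (by norm_num)
    have : (2.7182818286 : ℝ) ^ (4:ℕ) < 55 := by norm_num
    linarith [h4 ▸ (lt_trans hpow this)]
  -- final chain
  set L := Real.log n with hL
  set q := (U.edgeSet.ncard : ℝ) with hq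
  have hn0 : (0:ℝ) ≤ (n:ℝ) := by linarith
  have hA : (n:ℝ) * (L - 1) ≤ (n:ℝ) * (∑ d ∈ Finset.range (n-1), ((d:ℝ)+2)⁻¹) :=
    mul_le_mul_of_nonneg_left hharm hn0
  have hB : (n:ℝ) * 4 ≤ (n:ℝ) * L := mul_le_mul_of_nonneg_left hlog4 hn0
  have hq4 : (1/4) * ((n:ℝ) * L) ≤ q := by nlinarith
  have hck : (1 / (4 * (k:ℝ))) * (k:ℝ) = 1/4 := by field_simp
  calc 1 / (4 * (k:ℝ)) * (k:ℝ) * (n:ℝ) * L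
      = ((1 / (4 * (k:ℝ))) * (k:ℝ)) * ((n:ℝ) * L) := by ring
    _ = (1/4) * ((n:ℝ) * L) := by rw [hck]
    _ ≤ q := hq4
end

section
/- For every integer k ≥ 1, every real number α ≥ 1, every graph G with |V(G)| > α + k + 1 and treewidth k, and every normal tree-decomposition (B_x : x ∈ V(T)) of G of width k, there exists a vertex z ∈ V(T) such that for some set C of z-subtrees of T, α < Σ_{T'∈C} |G(T',z)| ≤ 2α. -/
set_option linter.unusedSectionVars false
set_option linter.unusedVariables false

open SimpleGraph

namespace Helper

variable {ι : Type} [DecidableEq ι] {T : SimpleGraph ι}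

/-- vertices reachable from `y` by a walk avoiding `z`. -/
def branchSet (T : SimpleGraph ι) (z y : ι) : Set ι := {x | ∃ w : T.Walk y x, z ∉ w.support}

lemma self_mem_branchSet (h : z ≠ y) : y ∈ branchSet T z y :=
  ⟨Walk.nil, by simp [h]⟩

lemma not_mem_branchSet_self : z ∉ branchSet T z y := by
  rintro ⟨w, hw⟩
  exact hw w.end_mem_support

lemma mem_branchSet_of_walk (hx : x ∈ branchSet T z y) (w : T.Walk x x')
    (hw : z ∉ w.support) : x' ∈ branchSet T z y := by
  obtain ⟨w0, hw0⟩ := hx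
  refine ⟨w0.append w, ?_⟩
  rw [Walk.mem_support_append_iff]
  tauto

lemma support_subset_branchSet (hx : x ∈ branchSet T z y) (w : T.Walk x x')
    (hw : z ∉ w.support) : ∀ u ∈ w.support, u ∈ branchSet T z y := by
  intro u hu
  exact mem_branchSet_of_walk hx (w.takeUntil u hu)
    (fun hz => hw (w.support_takeUntil_subset hu hz))


/-- Key uniqueness: a vertex lies in the branch of at most one neighbor of `z`. -/
lemma branch_unique (hT : T.IsTree) (h1 : T.Adj z y₁) (h2 : T.Adj z y₂)
    (hx1 : x ∈ branchSet T z y₁) (hx2 : x ∈ branchSet T z y₂) : y₁ = y₂ := by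
  obtain ⟨w1, hw1⟩ := hx1
  obtain ⟨w2, hw2⟩ := hx2
  have hz1 : z ∉ (w1.toPath : T.Walk y₁ x).support :=
    fun h => hw1 (w1.support_toPath_subset h)
  have hz2 : z ∉ (w2.toPath : T.Walk y₂ x).support :=
    fun h => hw2 (w2.support_toPath_subset h)
  have p1 : (Walk.cons h1 (w1.toPath : T.Walk y₁ x)).IsPath :=
    (w1.toPath.2).cons hz1
  have p2 : (Walk.cons h2 (w2.toPath : T.Walk y₂ x)).IsPath :=
    (w2.toPath.2).cons hz2
  have := (hT.existsUnique_path z x).unique p1 p2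
  have hs := congrArg Walk.support this
  rw [Walk.support_cons, Walk.support_cons, Walk.support_eq_cons (w1.toPath : T.Walk y₁ x),
    Walk.support_eq_cons (w2.toPath : T.Walk y₂ x)] at hs
  injection hs with _ hs'
  injection hs'

/-- every vertex other than `z` lies in the branch of some neighbor of `z`. -/
lemma exists_branch (hT : T.IsTree) (hx : x ≠ z) :
    ∃ y, T.Adj z y ∧ x ∈ branchSet T z y := by
  obtain ⟨p, hp⟩ := (hT.existsUnique_path z x).exists
  obtain ⟨y, h, q, rfl⟩ := Walk.exists_eq_cons_of_ne (Ne.symm hx) p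
  rw [Walk.cons_isPath_iff] at hp
  exact ⟨y, h, q, hp.2⟩


/-- a walk avoiding `z` starting at a branch vertex: the whole branch is closed. -/
lemma branchSet_forward (hT : T.IsTree) (hzy : T.Adj z y) (hyy : T.Adj y y'') (hne : y'' ≠ z) :
    branchSet T y y'' ⊆ branchSet T z y := by
  rintro x ⟨w, hw⟩
  have hzp : z ∉ (w.toPath : T.Walk y'' x).support := by
    intro hz
    have hyp : y ∉ (w.toPath : T.Walk y'' x).support :=
      fun h => (fun hh => hh (w.support_toPath_subset h)) hw
    -- two distinct paths from y'' to z
    have p1 : ((w.toPath : T.Walk y'' x).takeUntil z hz).IsPath := (w.toPath.2).takeUntil hz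
    have hyp1 : y ∉ ((w.toPath : T.Walk y'' x).takeUntil z hz).support :=
      fun h => hyp ((w.toPath : T.Walk y'' x).support_takeUntil_subset hz h)
    have p2 : (Walk.cons hyy.symm (Walk.cons hzy.symm Walk.nil) : T.Walk y'' z).IsPath := by
      rw [Walk.cons_isPath_iff, Walk.cons_isPath_iff]
      exact ⟨⟨Walk.IsPath.nil, by simp [hzy.ne']⟩, by simp [hne, hyy.ne']⟩
    have := (hT.existsUnique_path y'' z).unique p1 p2
    apply hyp1
    rw [this]
    simp
  exact ⟨Walk.cons hyy (w.toPath : T.Walk y'' x), by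
    rw [Walk.support_cons]
    simp only [List.mem_cons]
    rintro (h | h)
    · exact hzy.ne h
    · exact hzp h⟩

/-- a branch vertex (other than the neighbor itself) is not in the back branch. -/
lemma not_mem_back_branch (hT : T.IsTree) (hzy : T.Adj z y)
    (hx : x ∈ branchSet T z y) (hxy : x ≠ y) : x ∉ branchSet T y z := by
  rintro ⟨w, hw⟩
  obtain ⟨w2, hw2⟩ := hx
  have hzp2 : z ∉ (w2.toPath : T.Walk y x).support := fun h => hw2 (w2.support_toPath_subset h)
  have p2 : (Walk.cons hzy (w2.toPath : T.Walk y x)).IsPath := (w2.toPath.2).cons hzp2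
  have hyp : y ∉ (w.toPath : T.Walk z x).support := fun h => hw (w.support_toPath_subset h)
  have := (hT.existsUnique_path z x).unique (w.toPath.2) p2
  apply hyp
  rw [this, Walk.support_cons]
  right
  exact Walk.start_mem_support _


/-- helper: a walk whose support lies in `H.verts` and edges in `H` has `toSubgraph ≤ H`. -/
lemma toSubgraph_le_of_mem {a b : ι} {H : T.Subgraph} (p : T.Walk a b)
    (hs : ∀ x ∈ p.support, x ∈ H.verts) (he : ∀ e ∈ p.edges, e ∈ H.edgeSet) :
    p.toSubgraph ≤ H := by
  induction p with
  | nil =>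
    refine ⟨?_, fun u v huv => ?_⟩
    · rw [Walk.toSubgraph]; simpa using hs _ (by simp)
    · rw [Walk.toSubgraph] at huv; simp [singletonSubgraph_adj] at huv
  | cons h p ih =>
    rw [Walk.toSubgraph]
    refine sup_le ⟨?_, ?_⟩ (ih (fun x hx => hs x (by simp [hx])) (fun e heE => he e (by simp [heE])))
    · intro x hx
      simp only [subgraphOfAdj_verts, Set.mem_insert_iff, Set.mem_singleton_iff] at hx
      rcases hx with rfl|rfl
      · exact hs _ (by simp)
      · exact hs _ (by simp)
    · intro u v huv
      rw [subgraphOfAdj_adj] at huv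
      rcases Sym2.eq_iff.mp huv.symm with ⟨rfl, rfl⟩|⟨rfl, rfl⟩
      · exact (Subgraph.mem_edgeSet).mp (he s(u,v) (by simp))
      · exact ((Subgraph.mem_edgeSet).mp (he s(v,u) (by simp))).symm

/-- the branch subgraph: `z` together with the branch of `y`. -/
def Hb (T : SimpleGraph ι) (z y : ι) : T.Subgraph :=
  (⊤ : T.Subgraph).induce (insert z (branchSet T z y))


lemma Hb_verts : (Hb T z y).verts = insert z (branchSet T z y) := rfl

lemma Hb_adj : (Hb T z y).Adj a b ↔
    a ∈ insert z (branchSet T z y) ∧ b ∈ insert z (branchSet T z y) ∧ T.Adj a b := by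
  simp [Hb, Subgraph.induce_adj]

lemma toSubgraph_le_Hb {a b : ι} (w : T.Walk a b)
    (hs : ∀ u ∈ w.support, u ∈ (Hb T z y).verts) : w.toSubgraph ≤ Hb T z y := by
  refine toSubgraph_le_of_mem w hs ?_
  intro e he
  induction e with
  | h u v =>
    rw [Subgraph.mem_edgeSet, Hb_adj]
    exact ⟨hs _ (w.fst_mem_support_of_mem_edges he), hs _ (w.snd_mem_support_of_mem_edges he),
      w.adj_of_mem_edges he⟩

lemma walk_to_vert (hzy : T.Adj z y) (hx : x ∈ (Hb T z y).verts) :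
    ∃ w : T.Walk z x, ∀ u ∈ w.support, u ∈ (Hb T z y).verts := by
  rcases hx with rfl | hx
  · exact ⟨Walk.nil, by simp [Hb_verts]⟩
  · obtain ⟨w0, hw0⟩ := hx
    refine ⟨Walk.cons hzy w0, ?_⟩
    intro u hu
    rw [Walk.support_cons, List.mem_cons] at hu
    rcases hu with rfl | hu
    · exact Set.mem_insert _ _
    · exact Set.mem_insert_of_mem _
        (support_subset_branchSet (self_mem_branchSet hzy.ne) w0 hw0 u hu)

lemma Hb_connected (hzy : T.Adj z y) : (Hb T z y).Connected := by
  rw [Subgraph.connected_iff_forall_exists_walk_subgraph]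
  refine ⟨⟨z, Set.mem_insert _ _⟩, ?_⟩
  intro u v hu hv
  obtain ⟨wu, hwu⟩ := walk_to_vert hzy hu
  obtain ⟨wv, hwv⟩ := walk_to_vert hzy hv
  refine ⟨wu.reverse.append wv, toSubgraph_le_Hb _ ?_⟩
  intro a ha
  rw [Walk.mem_support_append_iff, Walk.support_reverse, List.mem_reverse] at ha
  rcases ha with ha | ha
  · exact hwu a ha
  · exact hwv a ha

lemma Hb_isTree (hT : T.IsTree) (hzy : T.Adj z y) : (Hb T z y).coe.IsTree := by
  refine ⟨(Hb_connected hzy).coe, ?_⟩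
  intro v c hc
  exact hT.IsAcyclic (c.map (Hb T z y).hom) (hc.map Subgraph.hom_injective)

lemma Hb_nbhd (hT : T.IsTree) (hzy : T.Adj z y) :
    ((Hb T z y).neighborSet z).Subsingleton := by
  intro a ha b hb
  rw [Subgraph.mem_neighborSet, Hb_adj] at ha hb
  have haB : a ∈ branchSet T z y := by
    rcases ha.2.1 with rfl | h
    · exact absurd rfl ha.2.2.ne'
    · exact h
  have hbB : b ∈ branchSet T z y := by
    rcases hb.2.1 with rfl | h
    · exact absurd rfl hb.2.2.ne'
    · exact h
  have h1 : a = y := branch_unique hT ha.2.2 hzy (self_mem_branchSet ha.2.2.ne) haB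
  have h2 : b = y := branch_unique hT hb.2.2 hzy (self_mem_branchSet hb.2.2.ne) hbB
  rw [h1, h2]


lemma Hb_maximal (hT : T.IsTree) (hzy : T.Adj z y) (H' : T.Subgraph)
    (hle : Hb T z y ≤ H') (htree : H'.coe.IsTree)
    (hnb : (H'.neighborSet z).Subsingleton) : H' = Hb T z y := by
  have hzv : z ∈ H'.verts := hle.1 (Set.mem_insert _ _)
  have hyadj : H'.Adj z y :=
    hle.2 (Hb_adj.mpr ⟨Set.mem_insert _ _,
      Set.mem_insert_of_mem _ (self_mem_branchSet hzy.ne), hzy⟩)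
  have hverts : H'.verts = (Hb T z y).verts := by
    apply Set.Subset.antisymm _ hle.1
    intro x hx
    by_cases hxz : x = z
    · exact hxz ▸ Set.mem_insert _ _
    -- walk from x to z inside H'
    have hpre : H'.Preconnected := ⟨htree.isConnected.preconnected⟩
    obtain ⟨w, hw⟩ := (Subgraph.preconnected_iff_forall_exists_walk_subgraph H').mp
      hpre hx hzv
    -- take until first hitting z, then reverse
    have hzs : z ∈ w.support := w.end_mem_support
    set q := (w.takeUntil z hzs).reverse with hq
    have hcount : q.support.count z = 1 := by
      rw [hq, Walk.support_reverse, List.count_reverse]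
      exact w.count_support_takeUntil_eq_one hzs
    have hqle : q.toSubgraph ≤ H' := by
      rw [hq, Walk.toSubgraph_reverse]
      refine le_trans (toSubgraph_le_of_mem _ ?_ ?_) hw
      · intro u hu
        rw [Walk.mem_verts_toSubgraph]
        exact w.support_takeUntil_subset hzs hu
      · intro e he
        rw [Walk.mem_edges_toSubgraph]
        exact w.edges_takeUntil_subset hzs he
    obtain ⟨y', hzy', q', hq'⟩ := Walk.exists_eq_cons_of_ne (fun h => hxz h.symm) q
    have hznq' : z ∉ q'.support := by
      intro hzq
      rw [hq', Walk.support_cons, List.count_cons_self] at hcount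
      exact (List.count_eq_zero.mp (by omega)) hzq
    have hy'H : H'.Adj z y' := by
      apply hqle.2
      rw [hq']
      simp [Walk.toSubgraph]
    have : y' = y := hnb hy'H hyadj
    subst this
    exact Set.mem_insert_of_mem _ ⟨q', hznq'⟩
  refine Subgraph.ext hverts ?_
  ext a b
  constructor
  · intro hab
    have h1 : a ∈ (Hb T z y).verts := hverts ▸ H'.edge_vert hab
    have h2 : b ∈ (Hb T z y).verts := hverts ▸ H'.edge_vert hab.symm
    exact Hb_adj.mpr ⟨h1, h2, H'.adj_sub hab⟩
  · exact fun hab => hle.2 hab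

/-- the key result: `Hb` is a `z`-subtree. -/
lemma Hb_isWSubtree (hT : T.IsTree) (hzy : T.Adj z y) :
    IsWSubtree T {z} (Hb T z y) := by
  refine ⟨Hb_isTree hT hzy, ?_, ?_⟩
  · rintro w rfl
    exact Hb_nbhd hT hzy
  · intro H' hle htree hnb
    exact Hb_maximal hT hzy H' hle htree (hnb z rfl)


section Decomp

variable {V : Type} [Fintype V] {G : SimpleGraph V}

/-- the part of `V` belonging to the branch of `y` at `z`. -/
def Gset (td : TreeDecomp G T) (z y : ι) : Set V :=
  (⋃ x ∈ branchSet T z y, td.bag x) \ td.bag z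

lemma mem_Gset {td : TreeDecomp G T} {v : V} :
    v ∈ Gset td z y ↔ (∃ x ∈ branchSet T z y, v ∈ td.bag x) ∧ v ∉ td.bag z := by
  simp [Gset]

lemma exists_bag_walk (td : TreeDecomp G T) {v : V} {x₁ x₂ : ι}
    (h1 : v ∈ td.bag x₁) (h2 : v ∈ td.bag x₂) :
    ∃ w : T.Walk x₁ x₂, ∀ u ∈ w.support, v ∈ td.bag u := by
  obtain ⟨p⟩ := (td.bag_connected v) ⟨x₁, h1⟩ ⟨x₂, h2⟩
  refine ⟨p.map (SimpleGraph.Embedding.induce {x | v ∈ td.bag x}).toHom, ?_⟩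
  intro u hu
  erw [Walk.support_map, List.mem_map] at hu
  obtain ⟨u', _, rfl⟩ := hu
  exact u'.2

lemma Gset_disjoint (hT : T.IsTree) (td : TreeDecomp G T) {z y₁ y₂ : ι}
    (h1 : T.Adj z y₁) (h2 : T.Adj z y₂) (hne : y₁ ≠ y₂) :
    Disjoint (Gset td z y₁) (Gset td z y₂) := by
  rw [Set.disjoint_left]
  rintro v hv1 hv2
  obtain ⟨⟨x₁, hx1, hvx1⟩, hz⟩ := mem_Gset.mp hv1
  obtain ⟨⟨x₂, hx2, hvx2⟩, _⟩ := mem_Gset.mp hv2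
  obtain ⟨w, hw⟩ := exists_bag_walk td hvx1 hvx2
  by_cases hzw : z ∈ w.support
  · exact hz (hw z hzw)
  · exact hne (branch_unique hT h1 h2 (mem_branchSet_of_walk hx1 w hzw) hx2)

lemma Gset_cover (hT : T.IsTree) (td : TreeDecomp G T) {v : V} {z : ι} (hz : v ∉ td.bag z) :
    ∃ y, T.Adj z y ∧ v ∈ Gset td z y := by
  obtain ⟨⟨x, hx⟩⟩ := (td.bag_connected v).nonempty
  have hxz : x ≠ z := by rintro rfl; exact hz hx
  obtain ⟨y, hzy, hxb⟩ := exists_branch hT hxz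
  exact ⟨y, hzy, mem_Gset.mpr ⟨⟨x, hxb, hx⟩, hz⟩⟩

lemma Gset_forward_subset (hT : T.IsTree) (td : TreeDecomp G T) {z y y'' : ι}
    (hzy : T.Adj z y) (hyy : T.Adj y y'') (hne : y'' ≠ z) :
    Gset td y y'' ⊆ Gset td z y \ td.bag y := by
  rintro v hv
  obtain ⟨⟨x, hxB, hvx⟩, hvy⟩ := mem_Gset.mp hv
  have hxzy : x ∈ branchSet T z y := branchSet_forward hT hzy hyy hne hxB
  have hvz : v ∉ td.bag z := by
    intro hvz
    obtain ⟨w, hw⟩ := exists_bag_walk td hvx hvz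
    by_cases hyw : y ∈ w.support
    · exact hvy (hw y hyw)
    · exact hne (branch_unique hT hyy hzy.symm (mem_branchSet_of_walk hxB w hyw)
        (self_mem_branchSet hzy.ne'))
  exact ⟨mem_Gset.mpr ⟨⟨x, hxzy, hvx⟩, hvz⟩, hvy⟩

lemma Gset_forward_cover (hT : T.IsTree) (td : TreeDecomp G T) {z y : ι} {v : V}
    (hzy : T.Adj z y) (hv : v ∈ Gset td z y) (hvy : v ∉ td.bag y) :
    ∃ y'', T.Adj y y'' ∧ y'' ≠ z ∧ v ∈ Gset td y y'' := by
  obtain ⟨⟨x, hxB, hvx⟩, hvz⟩ := mem_Gset.mp hv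
  have hxy : x ≠ y := by rintro rfl; exact hvy hvx
  obtain ⟨y'', hyy, hxB''⟩ := exists_branch hT hxy
  have hne : y'' ≠ z := by
    rintro rfl
    exact not_mem_back_branch hT hzy hxB hxy hxB''
  exact ⟨y'', hyy, hne, mem_Gset.mpr ⟨⟨x, hxB'', hvx⟩, hvy⟩⟩

lemma Gset_inter_bag (td : TreeDecomp G T) {z y : ι} (hzy : T.Adj z y) :
    Gset td z y ∩ td.bag y = td.bag y \ td.bag z := by
  ext v
  constructor
  · rintro ⟨hv, hvy⟩
    exact ⟨hvy, (mem_Gset.mp hv).2⟩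
  · rintro ⟨hvy, hvz⟩
    exact ⟨mem_Gset.mpr ⟨⟨y, self_mem_branchSet hzy.ne, hvy⟩, hvz⟩, hvy⟩

end Decomp


section Card

variable {W : Type} [Fintype W]

lemma ncard_diff_add_ncard_inter (s t : Set W) :
    (s \ t).ncard + (s ∩ t).ncard = s.ncard := by
  rw [← Set.ncard_union_eq (Disjoint.mono_right Set.inter_subset_right
    Set.disjoint_sdiff_left) (Set.toFinite _) (Set.toFinite _), Set.diff_union_inter]

lemma ncard_biUnion {β : Type} [DecidableEq β] (s : Finset β) (f : β → Set W)
    (h : ∀ a ∈ s, ∀ b ∈ s, a ≠ b → Disjoint (f a) (f b)) :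
    (⋃ a ∈ s, f a).ncard = ∑ a ∈ s, (f a).ncard := by
  induction s using Finset.induction_on with
  | empty => simp
  | @insert a s ha ih =>
    rw [Finset.set_biUnion_insert, Finset.sum_insert ha,
      Set.ncard_union_eq ?_ (Set.toFinite _) (Set.toFinite _),
      ih (fun x hx y hy hxy => h x (Finset.mem_insert_of_mem hx)
        y (Finset.mem_insert_of_mem hy) hxy)]
    rw [Set.disjoint_left]
    intro v hv hv2
    simp only [Set.mem_iUnion, exists_prop] at hv2
    obtain ⟨b, hb, hvb⟩ := hv2
    have hab : a ≠ b := by rintro rfl; exact ha hb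
    exact (Set.disjoint_left.mp (h a (Finset.mem_insert_self a s)
      b (Finset.mem_insert_of_mem hb) hab)) hv hvb

lemma greedy {β : Type} [DecidableEq β] {α : ℝ} (h0 : 0 ≤ α) (s : Finset β) (f : β → ℕ) :
    (∀ i ∈ s, (f i : ℝ) ≤ α) → α < ∑ i ∈ s, (f i : ℝ) →
    ∃ t ⊆ s, α < ∑ i ∈ t, (f i : ℝ) ∧ ∑ i ∈ t, (f i : ℝ) ≤ 2 * α := by
  induction s using Finset.strongInduction with
  | _ s ih =>
    intro hle hgt
    by_cases h2 : ∑ i ∈ s, (f i : ℝ) ≤ 2 * α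
    · exact ⟨s, subset_rfl, hgt, h2⟩
    · push_neg at h2
      have hne : s.Nonempty := by
        rcases Finset.eq_empty_or_nonempty s with rfl | h
        · simp at hgt; linarith
        · exact h
      obtain ⟨a, ha⟩ := hne
      have hsum : ∑ i ∈ s.erase a, (f i : ℝ) = (∑ i ∈ s, (f i : ℝ)) - f a := by
        rw [← Finset.add_sum_erase s _ ha]; ring
      obtain ⟨t, ht, h1, h2'⟩ := ih (s.erase a) (Finset.erase_ssubset ha)
        (fun i hi => hle i (Finset.mem_of_mem_erase hi))
        (by rw [hsum]; have := hle a ha; linarith)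
      exact ⟨t, ht.trans (Finset.erase_subset a s), h1, h2'⟩

end Card

section Assemble

variable {V : Type} [Fintype V] {G : SimpleGraph V}

lemma Hb_weight (td : TreeDecomp G T) (z y : ι) :
    (⋃ x ∈ (Hb T z y).verts, td.bag x) \ td.bag z = Gset td z y := by
  rw [Hb_verts, Set.biUnion_insert, Set.union_diff_left]
  rfl

lemma assemble (hT : T.IsTree) (td : TreeDecomp G T) {α : ℝ} (z : ι) (t : Finset ι)
    (ht : ∀ y ∈ t, T.Adj z y)
    (h1 : α < ∑ y ∈ t, (((Gset td z y).ncard : ℝ)))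
    (h2 : ∑ y ∈ t, (((Gset td z y).ncard : ℝ)) ≤ 2 * α) :
    ∃ z' : ι, ∃ C : Finset T.Subgraph,
      (∀ H ∈ C, IsWSubtree T {z'} H) ∧
      α < ∑ H ∈ C, ((((⋃ x ∈ H.verts, td.bag x) \ td.bag z').ncard : ℝ)) ∧
      ∑ H ∈ C, ((((⋃ x ∈ H.verts, td.bag x) \ td.bag z').ncard : ℝ)) ≤ 2 * α := by
  classical
  refine ⟨z, t.image (fun y => Hb T z y), ?_, ?_⟩
  · intro H hH
    obtain ⟨y, hy, rfl⟩ := Finset.mem_image.mp hH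
    exact Hb_isWSubtree hT (ht y hy)
  · have hinj : Set.InjOn (fun y => Hb T z y) t := by
      intro a ha b hb hab
      have hab' : Hb T z a = Hb T z b := hab
      have h1 : a ∈ (Hb T z a).verts :=
        Set.mem_insert_of_mem _ (self_mem_branchSet (ht a ha).ne)
      rw [hab'] at h1
      rcases h1 with h1 | h1
      · exact absurd h1 (ht a ha).ne'
      · exact branch_unique hT (ht a ha) (ht b hb)
          (self_mem_branchSet (ht a ha).ne) h1
    rw [Finset.sum_image (fun a ha b hb => hinj ha hb)]
    have : ∀ y ∈ t, ((((⋃ x ∈ (Hb T z y).verts, td.bag x) \ td.bag z).ncard : ℝ))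
        = (((Gset td z y).ncard : ℝ)) := fun y _ => by rw [Hb_weight]
    rw [Finset.sum_congr rfl this]
    exact ⟨h1, h2⟩

end Assemble


section Master

variable {V : Type} [Fintype V] [Nonempty V] {G : SimpleGraph V}

lemma NB_finite (hT : T.IsTree) (td : TreeDecomp G T) (z : ι) (P : ι → Prop)
    (hP : ∀ y, P y → T.Adj z y) :
    {y | P y ∧ (Gset td z y).Nonempty}.Finite := by
  classical
  set f : ι → V := fun y =>
    if h : (Gset td z y).Nonempty then h.choose else Classical.arbitrary V with hf
  refine Set.Finite.of_finite_image (f := f) (Set.toFinite _) ?_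
  intro a ha b hb hfab
  by_contra hab
  have hfa : f a ∈ Gset td z a := by
    rw [hf]; simp only [dif_pos ha.2]; exact ha.2.choose_spec
  have hfb : f b ∈ Gset td z b := by
    rw [hf]; simp only [dif_pos hb.2]; exact hb.2.choose_spec
  exact (Set.disjoint_left.mp (Gset_disjoint hT td (hP a ha.1) (hP b hb.1) hab))
    hfa (hfab ▸ hfb)

lemma master (hT : T.IsTree) (td : TreeDecomp G T) {k : ℕ} {α : ℝ} (hα : 1 ≤ α)
    (hnormal1 : ∀ x, (td.bag x).ncard = k + 1)
    (hnormal2 : ∀ x y, T.Adj x y → (td.bag x ∩ td.bag y).ncard = k)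
    (n : ℕ) : ∀ z y : ι, T.Adj z y → α < ((Gset td z y).ncard : ℝ) →
    (Gset td z y).ncard ≤ n →
    ∃ z' : ι, ∃ C : Finset T.Subgraph,
      (∀ H ∈ C, IsWSubtree T {z'} H) ∧
      α < ∑ H ∈ C, ((((⋃ x ∈ H.verts, td.bag x) \ td.bag z').ncard : ℝ)) ∧
      ∑ H ∈ C, ((((⋃ x ∈ H.verts, td.bag x) \ td.bag z').ncard : ℝ)) ≤ 2 * α := by
  classical
  induction n using Nat.strong_induction_on with
  | _ n ih =>
  intro z y hzy h1 h2
  by_cases hW : ((Gset td z y).ncard : ℝ) ≤ 2 * α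
  · refine assemble hT td z {y} (by simpa using hzy) (by simpa using h1) (by simpa using hW)
  · push_neg at hW
    have hby1 : (td.bag y \ td.bag z).ncard = 1 := by
      have h := ncard_diff_add_ncard_inter (td.bag y) (td.bag z)
      rw [hnormal1 y, hnormal2 y z hzy.symm] at h
      omega
    have hint : (Gset td z y ∩ td.bag y).ncard = 1 := by
      rw [Gset_inter_bag td hzy, hby1]
    have hdiff : (Gset td z y \ td.bag y).ncard + 1 = (Gset td z y).ncard := by
      have h := ncard_diff_add_ncard_inter (Gset td z y) (td.bag y)
      rw [hint] at h
      exact h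
    set S : Set ι := {y'' | (T.Adj y y'' ∧ y'' ≠ z) ∧ (Gset td y y'').Nonempty} with hS
    have hSfin : S.Finite := NB_finite hT td y _ (fun y'' h => h.1)
    set s1 := hSfin.toFinset with hs1
    have hmemS : ∀ a ∈ s1, (T.Adj y a ∧ a ≠ z) ∧ (Gset td y a).Nonempty := by
      intro a ha
      exact hSfin.mem_toFinset.mp ha
    have hcover : ⋃ a ∈ s1, Gset td y a = Gset td z y \ td.bag y := by
      apply Set.Subset.antisymm
      · intro v hv
        simp only [Set.mem_iUnion, exists_prop] at hv
        obtain ⟨a, ha, hva⟩ := hv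
        exact Gset_forward_subset hT td hzy (hmemS a ha).1.1 (hmemS a ha).1.2 hva
      · intro v hv
        obtain ⟨y'', hadj, hne, hv''⟩ := Gset_forward_cover hT td hzy hv.1 hv.2
        simp only [Set.mem_iUnion, exists_prop]
        exact ⟨y'', hSfin.mem_toFinset.mpr ⟨⟨hadj, hne⟩, ⟨v, hv''⟩⟩, hv''⟩
    have hsum : ∑ a ∈ s1, (Gset td y a).ncard = (Gset td z y \ td.bag y).ncard := by
      rw [← hcover]
      exact (ncard_biUnion s1 _ (fun a ha b hb hab =>
        Gset_disjoint hT td (hmemS a ha).1.1 (hmemS b hb).1.1 hab)).symm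
    have hW2 : (2:ℝ) ≤ ((Gset td z y).ncard : ℝ) := by linarith
    by_cases hbig : ∃ a ∈ s1, α < ((Gset td y a).ncard : ℝ)
    · obtain ⟨a, has1, hgt⟩ := hbig
      have hmem := hmemS a has1
      refine ih ((Gset td y a).ncard) ?_ y a hmem.1.1 hgt le_rfl
      have hsub : Gset td y a ⊆ Gset td z y \ td.bag y :=
        Gset_forward_subset hT td hzy hmem.1.1 hmem.1.2
      have hle : (Gset td y a).ncard ≤ (Gset td z y \ td.bag y).ncard :=
        Set.ncard_le_ncard hsub (Set.toFinite _)
      have hpos : 2 ≤ (Gset td z y).ncard := by exact_mod_cast hW2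
      omega
    · push_neg at hbig
      have h0 : (0:ℝ) ≤ α := by linarith
      have hsumgt : α < ∑ a ∈ s1, (((Gset td y a).ncard : ℝ)) := by
        have hcast : (∑ a ∈ s1, (((Gset td y a).ncard : ℝ))) =
            (((Gset td z y \ td.bag y).ncard : ℝ)) := by
          rw [← hsum]
          push_cast
          rfl
        have hcast2 : (((Gset td z y \ td.bag y).ncard : ℝ)) =
            ((Gset td z y).ncard : ℝ) - 1 := by
          have := hdiff
          have : (((Gset td z y \ td.bag y).ncard : ℝ)) + 1 = ((Gset td z y).ncard : ℝ) := by
            exact_mod_cast congrArg Nat.cast this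
          linarith
        rw [hcast, hcast2]
        linarith
      obtain ⟨t, hts, hgt, hle2⟩ := greedy h0 s1 (fun a => (Gset td y a).ncard) hbig hsumgt
      exact assemble hT td y t (fun a hat => (hmemS a (hts hat)).1.1) hgt hle2

end Master

end Helper

open Helper in
theorem statement_11 (k : ℕ) (hk : 1 ≤ k) (α : ℝ) (hα : 1 ≤ α)
    {V : Type} [Fintype V] (G : SimpleGraph V)
    (hcard : α + k + 1 < (Nat.card V : ℝ))
    (htwle : HasTreewidthLE G k) (htweq : ∀ j : ℕ, HasTreewidthLE G j → k ≤ j)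
    {ι : Type} (T : SimpleGraph ι) (td : TreeDecomp G T)
    (hnormal1 : ∀ x, (td.bag x).ncard = k + 1)
    (hnormal2 : ∀ x y, T.Adj x y → (td.bag x ∩ td.bag y).ncard = k) :
    ∃ z : ι, ∃ C : Finset T.Subgraph,
      (∀ H ∈ C, IsWSubtree T {z} H) ∧
      α < ∑ H ∈ C, ((((⋃ x ∈ H.verts, td.bag x) \ td.bag z).ncard : ℝ)) ∧
      ∑ H ∈ C, ((((⋃ x ∈ H.verts, td.bag x) \ td.bag z).ncard : ℝ)) ≤ 2 * α := by
  classical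
  have hT := td.isTree
  haveI hni : Nonempty ι := hT.isConnected.nonempty
  have hcpos : (0:ℝ) < (Nat.card V : ℝ) := by
    have hk0 : (0:ℝ) ≤ (k:ℝ) := Nat.cast_nonneg k
    linarith
  have hcardpos : 0 < Nat.card V := by exact_mod_cast hcpos
  haveI : Nonempty V := (Nat.card_pos_iff.mp hcardpos).1
  let z0 : ι := Classical.arbitrary ι
  have hk1 : k + 1 ≤ Nat.card V := by
    have h : ((k:ℝ) + 1) < (Nat.card V : ℝ) := by linarith
    have h2 : (k + 1 : ℕ) < Nat.card V := by exact_mod_cast h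
    omega
  have huniv : (Set.univ \ td.bag z0).ncard = Nat.card V - (k+1) := by
    have h := Helper.ncard_diff_add_ncard_inter Set.univ (td.bag z0)
    rw [Set.univ_inter, hnormal1 z0, Set.ncard_univ] at h
    omega
  have hunivR : (((Set.univ \ td.bag z0).ncard : ℕ) : ℝ) = (Nat.card V : ℝ) - ((k:ℝ)+1) := by
    rw [huniv, Nat.cast_sub hk1]
    push_cast
    ring
  have hSfin : {y | T.Adj z0 y ∧ (Gset td z0 y).Nonempty}.Finite :=
    Helper.NB_finite hT td z0 (fun y => T.Adj z0 y) (fun _ h => h)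
  set s0 := hSfin.toFinset with hs0
  have hmemS : ∀ a ∈ s0, T.Adj z0 a ∧ (Gset td z0 a).Nonempty := by
    intro a ha
    exact hSfin.mem_toFinset.mp ha
  have hcover0 : ⋃ a ∈ s0, Gset td z0 a = Set.univ \ td.bag z0 := by
    apply Set.Subset.antisymm
    · intro v hv
      simp only [Set.mem_iUnion, exists_prop] at hv
      obtain ⟨a, _, hva⟩ := hv
      exact ⟨Set.mem_univ v, (Helper.mem_Gset.mp hva).2⟩
    · intro v hv
      obtain ⟨y, hadj, hvy⟩ := Helper.Gset_cover hT td hv.2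
      simp only [Set.mem_iUnion, exists_prop]
      exact ⟨y, hSfin.mem_toFinset.mpr ⟨hadj, ⟨v, hvy⟩⟩, hvy⟩
  have hsum0 : ∑ a ∈ s0, (Gset td z0 a).ncard = (Set.univ \ td.bag z0).ncard := by
    rw [← hcover0]
    exact (Helper.ncard_biUnion s0 _ (fun a ha b hb hab =>
      Helper.Gset_disjoint hT td (hmemS a ha).1 (hmemS b hb).1 hab)).symm
  by_cases hbig : ∃ a ∈ s0, α < ((Gset td z0 a).ncard : ℝ)
  · obtain ⟨a, has0, hgt⟩ := hbig
    exact Helper.master hT td hα hnormal1 hnormal2 ((Gset td z0 a).ncard) z0 a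
      (hmemS a has0).1 hgt le_rfl
  · push_neg at hbig
    have h0 : (0:ℝ) ≤ α := by linarith
    have hsumgt : α < ∑ a ∈ s0, (((Gset td z0 a).ncard : ℝ)) := by
      have hcast : (∑ a ∈ s0, (((Gset td z0 a).ncard : ℝ))) =
          (((Set.univ \ td.bag z0).ncard : ℕ) : ℝ) := by
        rw [← hsum0]
        push_cast
        rfl
      rw [hcast, hunivR]
      linarith
    obtain ⟨t, hts, hgt, hle2⟩ := Helper.greedy h0 s0
      (fun a => (Gset td z0 a).ncard) hbig hsumgt
    exact Helper.assemble hT td z0 t (fun a hat => (hmemS a (hts hat)).1) hgt hle2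
end

section
/- For every integer k ≥ 1, every real number α ≥ 1, and every graph G with |V(G)| > α + k + 1 and treewidth at most k, there exists a set W ⊆ V(G) with |W| = k+1 such that for some set S of W-components of G, α < Σ_{C∈S} |V(C)| ≤ 2α. -/
open SimpleGraph

namespace TW
open SimpleGraph Walk

variable {ι : Type} {T : SimpleGraph ι} {r x c z z' b : ι}

/-- `z` is in the "subtree" cut off by `x` (from root `r`): every walk from `z` to `r` passes `x`. -/
def InT (T : SimpleGraph ι) (r x z : ι) : Prop := ∀ w : T.Walk z r, x ∈ w.support

/-- `z` is on the far side of `x` in the branch of `c`: reachable from `c` avoiding `x`. -/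
def Kc (T : SimpleGraph ι) (x c z : ι) : Prop := ∃ w : T.Walk c z, x ∉ w.support

lemma inT_root (z : ι) : InT T r r z := fun w => w.end_mem_support

lemma inT_of_walk (hz : InT T r x z) (w : T.Walk z z') (hw : x ∉ w.support) :
    InT T r x z' := by
  intro u
  by_contra hxu
  exact ((Walk.mem_support_append_iff _ _).mp (hz (w.append u))).elim hw hxu

lemma not_inT_iff : ¬ InT T r x z ↔ ∃ w : T.Walk z r, x ∉ w.support := by
  unfold InT; push_neg; rfl

private lemma exists_walk_avoid_aux [DecidableEq ι] (hc : InT T r x c) (hne : c ≠ x) :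
    ∀ n (w : T.Walk x r), w.length ≤ n → ∃ u : T.Walk x r, c ∉ u.support := by
  intro n
  induction n with
  | zero =>
    intro w h
    refine ⟨w, fun hcw => ?_⟩
    have := Walk.take_spec w hcw
    have hl : (w.takeUntil c hcw).length = 0 := by
      have := congrArg Walk.length this
      rw [Walk.length_append] at this
      omega
    exact hne (Walk.eq_of_length_eq_zero hl).symm
  | succ n IH =>
    intro w h
    by_cases hcw : c ∈ w.support
    · have hx : x ∈ (w.dropUntil c hcw).support := hc _
      refine IH ((w.dropUntil c hcw).dropUntil x hx) ?_
      have e1 := congrArg Walk.length (Walk.take_spec w hcw)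
      have e2 := congrArg Walk.length (Walk.take_spec (w.dropUntil c hcw) hx)
      rw [Walk.length_append] at e1 e2
      have hpos : 0 < (w.takeUntil c hcw).length := by
        rcases Nat.eq_zero_or_pos (w.takeUntil c hcw).length with h0 | h0
        · exact absurd (Walk.eq_of_length_eq_zero h0).symm hne
        · exact h0
      omega
    · exact ⟨w, hcw⟩

/-- (U1): if every walk `c → r` passes `x` and `c ≠ x`, there is a walk `x → r` avoiding `c`. -/
lemma exists_walk_avoid (ht : T.Connected) (hc : InT T r x c) (hne : c ≠ x) :
    ∃ u : T.Walk x r, c ∉ u.support := by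
  classical
  obtain ⟨w⟩ := ht.preconnected x r
  exact exists_walk_avoid_aux hc hne w.length w le_rfl

private lemma exists_walk_to_aux [DecidableEq ι] (ht : T.Connected) (hcx : InT T r x c)
    (hne : c ≠ x) (hz : InT T r c z) :
    ∀ n (w : T.Walk z c), w.length ≤ n → ∃ a : T.Walk z c, x ∉ a.support := by
  obtain ⟨u, hu⟩ := exists_walk_avoid ht hcx hne
  intro n
  induction n with
  | zero =>
    intro w h
    refine ⟨w, fun hxw => ?_⟩
    have := congrArg Walk.length (Walk.take_spec w hxw)
    rw [Walk.length_append] at this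
    have hl : (w.dropUntil x hxw).length = 0 := by omega
    exact hne.symm (Walk.eq_of_length_eq_zero hl)
  | succ n IH =>
    intro w h
    by_cases hxw : x ∈ w.support
    · have hcW : c ∈ ((w.takeUntil x hxw).append u).support := hz _
      have hcw1 : c ∈ (w.takeUntil x hxw).support := by
        rcases (Walk.mem_support_append_iff _ _).mp hcW with h1 | h1
        · exact h1
        · exact absurd h1 hu
      refine IH ((w.takeUntil x hxw).takeUntil c hcw1) ?_
      have e1 := congrArg Walk.length (Walk.take_spec w hxw)
      have e2 := congrArg Walk.length (Walk.take_spec (w.takeUntil x hxw) hcw1)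
      rw [Walk.length_append] at e1 e2
      have hpos : 0 < (w.dropUntil x hxw).length := by
        rcases Nat.eq_zero_or_pos (w.dropUntil x hxw).length with h0 | h0
        · exact absurd (Walk.eq_of_length_eq_zero h0) hne.symm
        · exact h0
      omega
    · exact ⟨w, hxw⟩

/-- (U2): from `z ∈ T_c` one can reach `c` avoiding `x` (when `c ∈ T_x`, `c ≠ x`). -/
lemma inTc_Kc (ht : T.Connected) (hcx : InT T r x c) (hne : c ≠ x) (hz : InT T r c z) :
    Kc T x c z := by
  classical
  obtain ⟨w⟩ := ht.preconnected z c
  obtain ⟨a, ha⟩ := exists_walk_to_aux ht hcx hne hz w.length w le_rfl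
  exact ⟨a.reverse, by rwa [Walk.support_reverse, List.mem_reverse]⟩

lemma Kc_self (h : c ≠ x) : Kc T x c c :=
  ⟨Walk.nil, by simp [Ne.symm h]⟩

lemma Kc_extend (hz : Kc T x c z) (w : T.Walk z z') (hw : x ∉ w.support) : Kc T x c z' := by
  obtain ⟨a, ha⟩ := hz
  exact ⟨a.append w, fun hx => ((Walk.mem_support_append_iff _ _).mp hx).elim ha hw⟩

lemma Kc_not_x : ¬ Kc T x c x := fun ⟨a, ha⟩ => ha a.end_mem_support

lemma Kc_ne_x (h : Kc T x c z) : z ≠ x := fun he => Kc_not_x (he ▸ h)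

lemma Kc_inT (hc : InT T r x c) (h : Kc T x c z) : InT T r x z := by
  obtain ⟨a, ha⟩ := h
  by_contra hz
  obtain ⟨w, hw⟩ := not_inT_iff.mp hz
  exact (Walk.mem_support_append_iff _ _).mp (hc (a.append w)) |>.elim ha hw

/-- (SEPC): every walk from `z ∈ K_c` to `x` passes through `c`, when `x ~ c`. -/
lemma sepc (hac : T.IsAcyclic) (hadj : T.Adj x c) (h : Kc T x c z) (w : T.Walk z x) :
    c ∈ w.support := by
  classical
  by_contra hcw
  obtain ⟨a, ha⟩ := h
  have hq1 : (Walk.cons hadj a.bypass).IsPath := by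
    rw [Walk.cons_isPath_iff]
    exact ⟨a.bypass_isPath, fun hx => ha (a.support_bypass_subset hx)⟩
  have hq2 : (w.bypass.reverse).IsPath := w.bypass_isPath.reverse
  have hequ := SimpleGraph.isAcyclic_iff_path_unique.mp hac ⟨_, hq1⟩ ⟨_, hq2⟩
  have hc1 : c ∈ (Walk.cons hadj a.bypass).support := by
    rw [Walk.support_cons]
    exact List.mem_cons_of_mem _ a.bypass.start_mem_support
  rw [show (Walk.cons hadj a.bypass) = w.bypass.reverse from congrArg Subtype.val hequ] at hc1
  rw [Walk.support_reverse, List.mem_reverse] at hc1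
  exact hcw (w.support_bypass_subset hc1)

lemma Kc_disjoint (hac : T.IsAcyclic) (h1 : T.Adj x c) (h2 : T.Adj x c') (hne : c ≠ c')
    (hz : Kc T x c z) (hz' : Kc T x c' z) : False := by
  classical
  obtain ⟨a, ha⟩ := hz
  obtain ⟨a', ha'⟩ := hz'
  set W := a.append a'.reverse with hW
  have hxW : x ∉ W.support := fun hx =>
    ((Walk.mem_support_append_iff _ _).mp hx).elim ha
      (fun hh => ha' (by rwa [Walk.support_reverse, List.mem_reverse] at hh))
  have hp2 : (Walk.cons h1.symm (Walk.cons h2 Walk.nil)).IsPath := by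
    rw [Walk.cons_isPath_iff, Walk.cons_isPath_iff]
    refine ⟨⟨Walk.IsPath.nil, by simp [h2.ne]⟩, ?_⟩
    simp [Walk.support_cons, h1.ne', hne]
  have hequ := SimpleGraph.isAcyclic_iff_path_unique.mp hac ⟨_, W.bypass_isPath⟩ ⟨_, hp2⟩
  have : x ∈ W.bypass.support := by
    rw [show W.bypass = (Walk.cons h1.symm (Walk.cons h2 Walk.nil)) from congrArg Subtype.val hequ]
    simp [Walk.support_cons]
  exact hxW (W.support_bypass_subset this)

/-- K_c ⊆ T_c -/
lemma Kc_inTc (hac : T.IsAcyclic) (hadj : T.Adj x c) (hxc : InT T r x c)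
    (h : Kc T x c z) : InT T r c z := by
  classical
  intro W
  by_contra hcW
  have hxW : x ∈ W.support := Kc_inT hxc h W
  have : c ∉ (W.takeUntil x hxW).support := fun hh => hcW (W.support_takeUntil_subset _ hh)
  exact this (sepc hac hadj h (W.takeUntil x hxW))

private lemma child_aux : ∀ {z : ι} (w : T.Walk z r), x ∈ w.support → z ≠ x →
    ∃ c, T.Adj c x ∧ Kc T x c z := by
  intro z w
  induction w with
  | nil =>
    intro hx hzx
    simp only [Walk.support_nil, List.mem_singleton] at hx
    exact absurd hx.symm hzx
  | @cons u b rr h p ih =>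
    intro hx hzx
    by_cases hbx : b = x
    · subst hbx
      exact ⟨u, h, Kc_self hzx⟩
    · have hxp : x ∈ p.support := by
        have hx2 : x ∈ u :: p.support := Walk.support_cons h p ▸ hx
        rcases List.mem_cons.mp hx2 with h1 | h1
        · exact absurd h1.symm hzx
        · exact h1
      obtain ⟨c, hc1, hc2⟩ := ih hxp hbx
      refine ⟨c, hc1, Kc_extend hc2 (Walk.cons h.symm Walk.nil) ?_⟩
      simp [Walk.support_cons, Ne.symm hbx, Ne.symm hzx]

/-- every `z ∈ T_x \ {x}` lies in some branch `K_c` with `c` adjacent to `x`. -/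
lemma exists_child (hz : InT T r x z) (hzx : z ≠ x) (w : T.Walk z r) :
    ∃ c, T.Adj c x ∧ Kc T x c z ∧ InT T r x c := by
  obtain ⟨c, hc1, hc2⟩ := child_aux w (hz w) hzx
  refine ⟨c, hc1, hc2, ?_⟩
  by_contra hcT
  obtain ⟨u, hu⟩ := not_inT_iff.mp hcT
  obtain ⟨a, ha⟩ := hc2
  have hra : x ∉ a.reverse.support := by rwa [Walk.support_reverse, List.mem_reverse]
  have := hz (a.reverse.append u)
  exact ((Walk.mem_support_append_iff _ _).mp this).elim hra hu

lemma dist_lt (ht : T.Connected) (hac : T.IsAcyclic) (hadj : T.Adj x c)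
    (h : Kc T x c z) : T.dist z c < T.dist z x := by
  classical
  obtain ⟨w, hw⟩ := ht.exists_walk_length_eq_dist z x
  have hcw : c ∈ w.support := sepc hac hadj h w
  have h1 : T.dist z c ≤ (w.takeUntil c hcw).length := SimpleGraph.dist_le _
  have e := congrArg Walk.length (Walk.take_spec w hcw)
  rw [Walk.length_append] at e
  have hpos : 0 < (w.dropUntil c hcw).length := by
    rcases Nat.eq_zero_or_pos (w.dropUntil c hcw).length with h0 | h0
    · exact absurd (Walk.eq_of_length_eq_zero h0) hadj.ne'
    · exact h0
  omega


/-! ### Decomposition layer -/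


variable {V : Type} {G : SimpleGraph V} {td : TreeDecomp G T} {u v p : V}

/-- vertices all of whose bags lie strictly inside the subtree cut off by `x`. -/
def Ehat (td : TreeDecomp G T) (r x : ι) : Set V :=
  {v | ∀ z, v ∈ td.bag z → (InT T r x z ∧ z ≠ x)}

/-- vertices all of whose bags lie in the branch `K_c`. -/
def Dc (td : TreeDecomp G T) (x c : ι) : Set V :=
  {v | ∀ z, v ∈ td.bag z → Kc T x c z}

def IsChild (T : SimpleGraph ι) (r x c : ι) : Prop := T.Adj c x ∧ InT T r x c

lemma bag_nonempty (td : TreeDecomp G T) (v : V) : ∃ z, v ∈ td.bag z := by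
  obtain ⟨⟨z, hz⟩⟩ := (td.bag_connected v).nonempty
  exact ⟨z, hz⟩

private lemma induce_walk_out {s : Set ι} {a b : ↥s} (w : (T.induce s).Walk a b) :
    ∃ w' : T.Walk a.1 b.1, ∀ y ∈ w'.support, y ∈ s := by
  induction w with
  | nil =>
    refine ⟨Walk.nil, ?_⟩
    intro y hy
    simp only [Walk.support_nil, List.mem_singleton] at hy
    subst hy
    exact Subtype.coe_prop _
  | @cons a u b h p ih =>
    obtain ⟨w', hw'⟩ := ih
    refine ⟨Walk.cons h w', ?_⟩
    intro y hy
    change y ∈ (a : ι) :: w'.support at hy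
    rcases List.mem_cons.mp hy with h1 | h1
    · exact h1 ▸ a.2
    · exact hw' y h1

lemma walk_in_bags (td : TreeDecomp G T) (hz : v ∈ td.bag z) (hz' : v ∈ td.bag z') :
    ∃ w : T.Walk z z', ∀ y ∈ w.support, v ∈ td.bag y := by
  obtain ⟨w⟩ := (td.bag_connected v).preconnected ⟨z, hz⟩ ⟨z', hz'⟩
  obtain ⟨w', hw'⟩ := induce_walk_out w
  exact ⟨w', hw'⟩

lemma Ehat_not_bag_x (hv : v ∈ Ehat td r x) : v ∉ td.bag x := fun h => (hv x h).2 rfl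

lemma Dc_not_bag_x (hv : v ∈ Dc td x c) : v ∉ td.bag x := fun h => Kc_not_x (hv x h)

lemma Dc_closed (hv : v ∈ Dc td x c) (hadj : G.Adj v u) (hu : u ∉ td.bag x) :
    u ∈ Dc td x c := by
  obtain ⟨z, hvz, huz⟩ := td.bag_edge hadj
  intro z' hz'
  obtain ⟨w, hw⟩ := walk_in_bags td huz hz'
  exact Kc_extend (hv z hvz) w (fun hx => hu (hw x hx))

lemma Dc_cover (ht : T.IsTree) (hv : v ∈ Ehat td r x) :
    ∃ c, IsChild T r x c ∧ v ∈ Dc td x c := by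
  obtain ⟨z₀, hz₀⟩ := bag_nonempty td v
  obtain ⟨hin, hne⟩ := hv z₀ hz₀
  obtain ⟨w⟩ := ht.isConnected.preconnected z₀ r
  obtain ⟨c, hadj, hKc, hInT⟩ := exists_child hin hne w
  refine ⟨c, ⟨hadj, hInT⟩, ?_⟩
  intro z hz
  obtain ⟨w', hw'⟩ := walk_in_bags td hz₀ hz
  exact Kc_extend hKc w' (fun hx => Ehat_not_bag_x hv (hw' x hx))

lemma Dc_subset_Ehat (hc : IsChild T r x c) (hv : v ∈ Dc td x c) : v ∈ Ehat td r x :=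
  fun z hz => ⟨Kc_inT hc.2 (hv z hz), Kc_ne_x (hv z hz)⟩

lemma Dc_disj {c' : ι} (ht : T.IsTree) (hc : IsChild T r x c) (hc' : IsChild T r x c')
    (hne : c ≠ c') (hv : v ∈ Dc td x c) (hv' : v ∈ Dc td x c') : False := by
  obtain ⟨z₀, hz₀⟩ := bag_nonempty td v
  exact Kc_disjoint ht.IsAcyclic hc.1.symm hc'.1.symm hne (hv z₀ hz₀) (hv' z₀ hz₀)

lemma Ehatc_subset_Dc (ht : T.IsTree) (hc : IsChild T r x c) (hv : v ∈ Ehat td r c) :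
    v ∈ Dc td x c :=
  fun z hz => inTc_Kc ht.isConnected hc.2 hc.1.ne (hv z hz).1

lemma Dc_diff_bag (ht : T.IsTree) (hc : IsChild T r x c) (hv : v ∈ Dc td x c)
    (hv' : v ∉ Ehat td r c) : v ∈ td.bag c := by
  simp only [Ehat, Set.mem_setOf_eq] at hv'
  push_neg at hv'
  obtain ⟨z, hz, hz2⟩ := hv'
  by_cases hzc : z = c
  · exact hzc ▸ hz
  · exact absurd (hz2 (Kc_inTc ht.IsAcyclic hc.1.symm hc.2 (hv z hz))) hzc

lemma bag_x_and_Kc (ht : T.IsTree) (hc : IsChild T r x c) (hvx : v ∈ td.bag x)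
    (hvz : v ∈ td.bag z) (hK : Kc T x c z) : v ∈ td.bag c := by
  obtain ⟨w, hw⟩ := walk_in_bags td hvz hvx
  exact hw c (sepc ht.IsAcyclic hc.1.symm hK w)

lemma mem_Ehatc_of_bag (ht : T.IsTree) (hc : IsChild T r x c) (huz : u ∈ td.bag z)
    (hK : Kc T x c z) (huc : u ∉ td.bag c) (hux : u ∉ td.bag x) : u ∈ Ehat td r c := by
  intro z' hz'
  obtain ⟨w, hw⟩ := walk_in_bags td huz hz'
  have hK' : Kc T x c z' := Kc_extend hK w (fun hx => hux (hw x hx))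
  refine ⟨Kc_inTc ht.IsAcyclic hc.1.symm hc.2 hK', ?_⟩
  intro hzc
  exact huc (hzc ▸ hz')

lemma Ehatc_closed (ht : T.IsTree) (hc : IsChild T r x c) (hv : v ∈ Ehat td r c)
    (hadj : G.Adj v u) (huc : u ∉ td.bag c) : u ∈ Ehat td r c := by
  obtain ⟨z, hvz, huz⟩ := td.bag_edge hadj
  have hK : Kc T x c z := inTc_Kc ht.isConnected hc.2 hc.1.ne (hv z hvz).1
  by_cases hux : u ∈ td.bag x
  · exact absurd (bag_x_and_Kc ht hc hux huz hK) huc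
  · exact mem_Ehatc_of_bag ht hc huz hK huc hux

lemma P_closed (ht : T.IsTree) (hc : IsChild T r x c) (hp : p ∈ td.bag c) (hpx : p ∉ td.bag x)
    (hadj : G.Adj p u) (huc : u ∉ td.bag c) : u ∈ Ehat td r c := by
  obtain ⟨z, hpz, huz⟩ := td.bag_edge hadj
  have hK : Kc T x c z := by
    obtain ⟨w, hw⟩ := walk_in_bags td hp hpz
    exact ⟨w, fun hx => hpx (hw x hx)⟩
  by_cases hux : u ∈ td.bag x
  · exact absurd (bag_x_and_Kc ht hc hux huz hK) huc
  · exact mem_Ehatc_of_bag ht hc huz hK huc hux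

lemma Ehat_root (hv : v ∉ td.bag r) : v ∈ Ehat td r r :=
  fun z hz => ⟨inT_root z, fun h => hv (h ▸ hz)⟩

lemma Ehatc_subset_Ehat (ht : T.IsTree) (hc : IsChild T r x c) :
    Ehat td r c ⊆ Ehat td r x :=
  fun _ hv => Dc_subset_Ehat hc (Ehatc_subset_Dc ht hc hv)

lemma Ehat_not_bag (hv : v ∈ Ehat td r c) : v ∉ td.bag c := fun h => (hv c h).2 rfl


/-! ### Descent -/

noncomputable def mu2 (td : TreeDecomp G T) (r x : ι) : ℕ :=
  sInf {d | ∃ v ∈ Ehat td r x, ∃ z, v ∈ td.bag z ∧ T.dist z x = d}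

lemma descent_aux [Finite V] (ht : T.IsTree) {m : ℕ} (hm : 1 ≤ m) :
    ∀ N : ℕ, ∀ d : ℕ, ∀ x : ι, m ≤ (Ehat td r x).ncard → (Ehat td r x).ncard ≤ N →
      mu2 td r x ≤ d →
      ∃ y, m ≤ (Ehat td r y).ncard ∧ ∀ c, IsChild T r y c → (Ehat td r c).ncard < m := by
  intro N
  induction N using Nat.strong_induction_on with
  | _ N IHN =>
  intro d
  induction d using Nat.strong_induction_on with
  | _ d IHd =>
  intro x hP hN hd
  by_cases hall : ∀ c, IsChild T r x c → (Ehat td r c).ncard < m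
  · exact ⟨x, hP, hall⟩
  · push_neg at hall
    obtain ⟨c, hc, hcge⟩ := hall
    have hsub : Ehat td r c ⊆ Ehat td r x := Ehatc_subset_Ehat ht hc
    have hle : (Ehat td r c).ncard ≤ (Ehat td r x).ncard :=
      Set.ncard_le_ncard hsub (Set.toFinite _)
    rcases lt_or_eq_of_le hle with hlt | heq
    · exact IHN (Ehat td r c).ncard (lt_of_lt_of_le hlt hN) (mu2 td r c) c hcge le_rfl le_rfl
    · have hseteq : Ehat td r c = Ehat td r x :=
        Set.eq_of_subset_of_ncard_le hsub (le_of_eq heq.symm) (Set.toFinite _)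
      have hsetne : {d | ∃ v ∈ Ehat td r x, ∃ z, v ∈ td.bag z ∧ T.dist z x = d}.Nonempty := by
        have hne : (Ehat td r x).Nonempty := Set.nonempty_of_ncard_ne_zero (by omega)
        obtain ⟨v0, hv0⟩ := hne
        obtain ⟨z0, hz0⟩ := bag_nonempty td v0
        exact ⟨T.dist z0 x, v0, hv0, z0, hz0, rfl⟩
      obtain ⟨v1, hv1, z1, hz1, hdist⟩ := Nat.sInf_mem hsetne
      have hv1c : v1 ∈ Ehat td r c := hseteq ▸ hv1
      have hK : Kc T x c z1 := (Ehatc_subset_Dc ht hc hv1c) z1 hz1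
      have hlt2 : T.dist z1 c < T.dist z1 x := dist_lt ht.isConnected ht.IsAcyclic hc.1.symm hK
      have hmuc : mu2 td r c ≤ T.dist z1 c := Nat.sInf_le ⟨v1, hv1c, z1, hz1, rfl⟩
      have hmu : mu2 td r c < mu2 td r x := by
        have : mu2 td r x = T.dist z1 x := hdist.symm
        omega
      exact IHd (mu2 td r c) (by omega) c hcge (by omega) le_rfl

lemma descent [Finite V] (ht : T.IsTree) {m : ℕ} (hm : 1 ≤ m) (x₀ : ι)
    (h₀ : m ≤ (Ehat td r x₀).ncard) :
    ∃ y, m ≤ (Ehat td r y).ncard ∧ ∀ c, IsChild T r y c → (Ehat td r c).ncard < m :=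
  descent_aux ht hm (Ehat td r x₀).ncard (mu2 td r x₀) x₀ h₀ le_rfl le_rfl

/-! ### Greedy -/

lemma greedy_aux {β : Type*} (f : β → ℕ) {m : ℕ} (hm : 1 ≤ m) :
    ∀ l : List β, ∀ acc : ℕ, acc ≤ m - 1 → m ≤ acc + (l.map f).sum →
    (∀ a ∈ l, f a ≤ m - 1) →
    ∃ l' : List β, l'.Sublist l ∧ m ≤ acc + (l'.map f).sum ∧
      acc + (l'.map f).sum ≤ 2*m - 2 := by
  intro l
  induction l with
  | nil => intro acc h1 h2 _; simp only [List.map_nil, List.sum_nil] at h2; omega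
  | cons a t ih =>
    intro acc h1 h2 hall
    by_cases hcase : m ≤ acc + f a
    · refine ⟨[a], ?_, ?_, ?_⟩
      · exact (List.nil_sublist t).cons₂ a
      · simpa using hcase
      · have := hall a List.mem_cons_self
        simp only [List.map_cons, List.sum_cons, List.map_nil, List.sum_nil]
        omega
    · have h2' : m ≤ (acc + f a) + (t.map f).sum := by
        simp only [List.map_cons, List.sum_cons] at h2; omega
      obtain ⟨l', hsub, hge, hle⟩ := ih (acc + f a) (by omega) h2'
        (fun b hb => hall b (List.mem_cons_of_mem a hb))
      refine ⟨a :: l', hsub.cons₂ a, ?_, ?_⟩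
      · simp only [List.map_cons, List.sum_cons]; omega
      · simp only [List.map_cons, List.sum_cons]; omega

/-! ### unions of lists of sets -/

def sUnionL (l : List (Set V)) : Set V := {v | ∃ s ∈ l, v ∈ s}

lemma sUnionL_nil : sUnionL ([] : List (Set V)) = ∅ := by
  ext v; simp [sUnionL]

lemma sUnionL_cons (a : Set V) (l : List (Set V)) : sUnionL (a :: l) = a ∪ sUnionL l := by
  ext v
  simp only [sUnionL, List.mem_cons, Set.mem_setOf_eq, Set.mem_union]
  constructor
  · rintro ⟨s, hs | hs, hvs⟩
    · exact Or.inl (hs ▸ hvs)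
    · exact Or.inr ⟨s, hs, hvs⟩
  · rintro (hv | ⟨s, hs, hvs⟩)
    · exact ⟨a, Or.inl rfl, hv⟩
    · exact ⟨s, Or.inr hs, hvs⟩

lemma ncard_sUnionL [Finite V] :
    ∀ l : List (Set V), l.Pairwise Disjoint →
      (sUnionL l).ncard = (l.map Set.ncard).sum := by
  intro l
  induction l with
  | nil => intro _; simp [sUnionL_nil]
  | cons a t ih =>
    intro hp
    obtain ⟨h1, h2⟩ := List.pairwise_cons.mp hp
    rw [sUnionL_cons, List.map_cons, List.sum_cons]
    have hd : Disjoint a (sUnionL t) := by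
      rw [Set.disjoint_left]
      rintro v hv ⟨s, hs, hvs⟩
      exact (h1 s hs).le_bot ⟨hv, hvs⟩ |>.elim
    rw [Set.ncard_union_eq hd (Set.toFinite _) (Set.toFinite _), ih h2]

/-! ### The core combinatorial lemma -/

lemma core [Finite V] (ht : T.IsTree) (td : TreeDecomp G T) (r : ι) {k m : ℕ} (hm : 2 ≤ m)
    (hbags : ∀ y, (td.bag y).ncard ≤ k + 1)
    (hroot : m ≤ (Ehat td r r).ncard) :
    ∃ (W₀ U : Set V), W₀.ncard ≤ k + 1 ∧ Disjoint U W₀ ∧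
      (∀ v ∈ U, ∀ u, G.Adj v u → u ∈ U ∪ W₀) ∧ m ≤ U.ncard ∧ U.ncard ≤ 2*m - 2 := by
  classical
  obtain ⟨x, hx, hmin⟩ := descent ht (by omega) r hroot
  by_cases hbig : ∃ c, IsChild T r x c ∧ m ≤ (Dc td x c).ncard
  · -- Case 2 : one heavy branch
    obtain ⟨c, hc, hDc⟩ := hbig
    have he : (Ehat td r c).ncard ≤ m - 1 := by have := hmin c hc; omega
    have hsplit : Dc td x c ⊆ Ehat td r c ∪ (td.bag c \ td.bag x) := by
      intro v hv
      by_cases h1 : v ∈ Ehat td r c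
      · exact Or.inl h1
      · exact Or.inr ⟨Dc_diff_bag ht hc hv h1, Dc_not_bag_x hv⟩
    have hcount : m ≤ (Ehat td r c).ncard + (td.bag c \ td.bag x).ncard := by
      calc m ≤ (Dc td x c).ncard := hDc
        _ ≤ (Ehat td r c ∪ (td.bag c \ td.bag x)).ncard :=
            Set.ncard_le_ncard hsplit (Set.toFinite _)
        _ ≤ _ := Set.ncard_union_le _ _
    obtain ⟨P, hPsub, hPcard⟩ := Set.exists_subset_card_eq
      (show m - (Ehat td r c).ncard ≤ (td.bag c \ td.bag x).ncard by omega)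
    have hPc : P ⊆ td.bag c := hPsub.trans Set.diff_subset
    have hPx : ∀ p ∈ P, p ∉ td.bag x := fun p hp => (hPsub hp).2
    have hEP : Disjoint (Ehat td r c) P := by
      rw [Set.disjoint_left]
      exact fun v hv hvP => Ehat_not_bag hv (hPc hvP)
    have hUcard : (Ehat td r c ∪ P).ncard = m := by
      rw [Set.ncard_union_eq hEP (Set.toFinite _) (Set.toFinite _), hPcard]
      omega
    refine ⟨td.bag c \ P, Ehat td r c ∪ P, ?_, ?_, ?_, ?_, ?_⟩
    · exact le_trans (Set.ncard_le_ncard Set.diff_subset (Set.toFinite _)) (hbags c)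
    · rw [Set.disjoint_left]
      rintro v (hv | hv)
      · exact fun hv2 => Ehat_not_bag hv hv2.1
      · exact fun hv2 => hv2.2 hv
    · intro v hv u hadj
      by_cases huc : u ∈ td.bag c
      · by_cases huP : u ∈ P
        · exact Or.inl (Or.inr huP)
        · exact Or.inr ⟨huc, huP⟩
      · rcases hv with hv | hv
        · exact Or.inl (Or.inl (Ehatc_closed ht hc hv hadj huc))
        · exact Or.inl (Or.inl (P_closed ht hc (hPc hv) (hPx v hv) hadj huc))
    · omega
    · omega
  · -- Case 1 : all branches light; greedy
    push_neg at hbig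
    set DD : Set (Set V) := {S | S.Nonempty ∧ ∃ c, IsChild T r x c ∧ S = Dc td x c} with hDD
    have hfin : DD.Finite := Set.toFinite _
    set l := hfin.toFinset.toList with hl
    have hmem : ∀ S, S ∈ l ↔ S ∈ DD := by
      intro S; rw [hl, Finset.mem_toList, Set.Finite.mem_toFinset]
    have hnodup : l.Nodup := Finset.nodup_toList _
    have hpair : l.Pairwise Disjoint := by
      refine List.Pairwise.imp_of_mem ?_ hnodup
      intro S S' hS hS' hne
      obtain ⟨hSne, c1, hc1, hSeq1⟩ := (hmem S).mp hS
      obtain ⟨hSne', c2, hc2, hSeq2⟩ := (hmem S').mp hS'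
      have hcc : c1 ≠ c2 := by
        rintro rfl
        exact hne (hSeq1.trans hSeq2.symm)
      rw [Set.disjoint_left]
      intro v hv hv'
      exact Dc_disj ht hc1 hc2 hcc (hSeq1 ▸ hv) (hSeq2 ▸ hv')
    have hunion : sUnionL l = Ehat td r x := by
      ext v
      constructor
      · rintro ⟨S, hS, hvS⟩
        obtain ⟨-, c1, hc1, rfl⟩ := (hmem S).mp hS
        exact Dc_subset_Ehat hc1 hvS
      · intro hv
        obtain ⟨c1, hc1, hv1⟩ := Dc_cover ht hv
        exact ⟨Dc td x c1, (hmem _).mpr ⟨⟨v, hv1⟩, c1, hc1, rfl⟩, hv1⟩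
    have hsum : (l.map Set.ncard).sum = (Ehat td r x).ncard := by
      rw [← ncard_sUnionL l hpair, hunion]
    have hsmall : ∀ S ∈ l, S.ncard ≤ m - 1 := by
      intro S hS
      obtain ⟨-, c1, hc1, rfl⟩ := (hmem S).mp hS
      have := hbig c1 hc1
      omega
    obtain ⟨l', hsub, hge, hle⟩ := greedy_aux Set.ncard (by omega) l 0 (by omega)
      (by omega) hsmall
    have hpair' : l'.Pairwise Disjoint := hpair.sublist hsub
    have hUcard : (sUnionL l').ncard = (l'.map Set.ncard).sum := ncard_sUnionL l' hpair'
    refine ⟨td.bag x, sUnionL l', hbags x, ?_, ?_, ?_, ?_⟩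
    · rw [Set.disjoint_left]
      rintro v ⟨S, hS, hvS⟩ hvx
      obtain ⟨-, c1, hc1, rfl⟩ := (hmem S).mp (hsub.subset hS)
      exact Dc_not_bag_x hvS hvx
    · rintro v ⟨S, hS, hvS⟩ u hadj
      obtain ⟨-, c1, hc1, hSeq⟩ := (hmem S).mp (hsub.subset hS)
      by_cases hux : u ∈ td.bag x
      · exact Or.inr hux
      · exact Or.inl ⟨S, hS, hSeq ▸ Dc_closed (hSeq ▸ hvS) hadj hux⟩
    · omega
    · omega

/-! ### Assembly: components -/

section Assembly

variable {V' : Type} [Fintype V']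

lemma walk_closed {H : SimpleGraph V'} {U : Set V'}
    (hcl : ∀ a b, H.Adj a b → a ∈ U → b ∈ U) :
    ∀ {a b : V'}, H.Walk a b → a ∈ U → b ∈ U := by
  intro a b w
  induction w with
  | nil => exact id
  | cons h p ih => exact fun ha => ih (hcl _ _ h ha)

lemma sum_ncard_disj {κ : Type} (f : κ → Set V') :
    ∀ S : Finset κ, (∀ i ∈ S, ∀ j ∈ S, i ≠ j → Disjoint (f i) (f j)) →
      ∑ i ∈ S, (f i).ncard = (⋃ i ∈ S, f i).ncard := by
  classical
  intro S
  induction S using Finset.induction_on with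
  | empty => simp
  | @insert a S ha ih =>
    intro hdisj
    rw [Finset.sum_insert ha, Finset.set_biUnion_insert]
    have hd : Disjoint (f a) (⋃ i ∈ S, f i) := by
      rw [Set.disjoint_left]
      intro v hv hv'
      simp only [Set.mem_iUnion, exists_prop] at hv'
      obtain ⟨j, hj, hvj⟩ := hv'
      have : a ≠ j := by rintro rfl; exact ha hj
      exact ((hdisj a (Finset.mem_insert_self a S) j (Finset.mem_insert_of_mem hj) this).le_bot
        ⟨hv, hvj⟩).elim
    rw [Set.ncard_union_eq hd (Set.toFinite _) (Set.toFinite _),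
      ih (fun i hi j hj hij => hdisj i (Finset.mem_insert_of_mem hi) j
        (Finset.mem_insert_of_mem hj) hij)]

lemma comp_decomp {H : SimpleGraph V'} {U : Set V'}
    (hcl : ∀ a b : V', H.Adj a b → a ∈ U → b ∈ U) :
    ∃ S : Finset H.ConnectedComponent, ∑ c ∈ S, c.supp.ncard = U.ncard := by
  classical
  haveI : Fintype H.ConnectedComponent := Fintype.ofFinite _
  set S := Finset.univ.filter (fun c : H.ConnectedComponent => c.supp ⊆ U) with hS
  have hdisj : ∀ i ∈ S, ∀ j ∈ S, i ≠ j → Disjoint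
      (SimpleGraph.ConnectedComponent.supp i) (SimpleGraph.ConnectedComponent.supp j) := by
    intro i _ j _ hij
    rw [Set.disjoint_left]
    intro v hvi hvj
    rw [SimpleGraph.ConnectedComponent.mem_supp_iff] at hvi hvj
    exact hij (hvi ▸ hvj ▸ rfl)
  refine ⟨S, ?_⟩
  rw [sum_ncard_disj _ S hdisj]
  congr 1
  ext v
  simp only [Set.mem_iUnion, exists_prop]
  constructor
  · rintro ⟨c, hc, hvc⟩
    rw [hS, Finset.mem_filter] at hc
    exact hc.2 hvc
  · intro hv
    refine ⟨H.connectedComponentMk v, ?_, SimpleGraph.ConnectedComponent.mem_supp_iff _ _ |>.mpr rfl⟩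
    rw [hS, Finset.mem_filter]
    refine ⟨Finset.mem_univ _, ?_⟩
    intro u hu
    rw [SimpleGraph.ConnectedComponent.mem_supp_iff] at hu
    obtain ⟨w⟩ := SimpleGraph.ConnectedComponent.exact hu
    exact walk_closed hcl w.reverse hv

lemma ncard_subtype (s : Set V') (U : Set V') (hU : U ⊆ s) :
    ({a : ↥s | ↑a ∈ U}).ncard = U.ncard := by
  have himg : Subtype.val '' {a : ↥s | ↑a ∈ U} = U := by
    ext v
    simp only [Set.mem_image, Set.mem_setOf_eq]
    constructor
    · rintro ⟨⟨a, hs⟩, ha, rfl⟩; exact ha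
    · intro hv; exact ⟨⟨v, hU hv⟩, hv, rfl⟩
  rw [← Set.ncard_image_of_injective {a : ↥s | ↑a ∈ U} Subtype.val_injective, himg]

lemma finisher {G : SimpleGraph V'} (Wf : Finset V') (U : Set V')
    (hdisj : ∀ v ∈ U, v ∉ Wf)
    (hcl : ∀ v ∈ U, ∀ u, G.Adj v u → u ∈ U ∨ u ∈ Wf) :
    ∃ S : Finset ((G.induce ((Wf : Set V')ᶜ)).ConnectedComponent),
      ∑ c ∈ S, c.supp.ncard = U.ncard := by
  classical
  set s : Set V' := (Wf : Set V')ᶜ with hs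
  set U' : Set ↥s := {a : ↥s | ↑a ∈ U} with hU'
  have hcl' : ∀ a b : ↥s, (G.induce s).Adj a b → a ∈ U' → b ∈ U' := by
    intro a b hadj ha
    have hGadj : G.Adj ↑a ↑b := hadj
    rcases hcl ↑a ha ↑b hGadj with h | h
    · exact h
    · exact absurd h (b.2 : ↑b ∈ (Wf : Set V')ᶜ)
  obtain ⟨S, hsum⟩ := comp_decomp hcl'
  refine ⟨S, ?_⟩
  rw [hsum, hU', ncard_subtype]
  intro v hv
  exact fun hmem => hdisj v hv hmem

end Assembly

end TW

theorem statement_12 (k : ℕ) (hk : 1 ≤ k) (α : ℝ) (hα : 1 ≤ α)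
    {V : Type} [Fintype V] (G : SimpleGraph V)
    (hcard : α + k + 1 < (Nat.card V : ℝ)) (htw : HasTreewidthLE G k) :
    ∃ W : Finset V, W.card = k + 1 ∧
      ∃ S : Finset ((G.induce ((W : Set V)ᶜ)).ConnectedComponent),
        α < ∑ c ∈ S, ((c.supp.ncard : ℝ)) ∧
        ∑ c ∈ S, ((c.supp.ncard : ℝ)) ≤ 2 * α := by
  classical
  obtain ⟨ι, T, td, hbags⟩ := htw
  have hn' : Nat.card V = Fintype.card V := Nat.card_eq_fintype_card
  have hkn : k + 2 ≤ Nat.card V := by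
    have h1 : ((k:ℝ) + 2) ≤ α + k + 1 := by linarith
    have h2 : (((k + 2 : ℕ)):ℝ) < (Nat.card V : ℝ) := by
      push_cast; exact lt_of_le_of_lt (by linarith) hcard
    exact_mod_cast h2.le
  by_cases hsmall : ((Nat.card V : ℕ) : ℝ) ≤ 2*α + k + 1
  · -- trivial branch : take all components
    obtain ⟨Wf, -, hWcard⟩ := Finset.exists_subset_card_eq
      (show k + 1 ≤ (Finset.univ : Finset V).card by rw [Finset.card_univ, ← hn']; omega)
    refine ⟨Wf, hWcard, ?_⟩
    obtain ⟨S, hS⟩ := TW.finisher Wf ((Wf : Set V)ᶜ)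
      (fun v hv hmem => hv (Finset.mem_coe.mpr hmem))
      (fun v _ u _ => by
        by_cases h : u ∈ Wf
        · exact Or.inr h
        · exact Or.inl (fun hc => h (Finset.mem_coe.mp hc)))
    have hval : ((Wf : Set V)ᶜ).ncard = Nat.card V - (k+1) := by
      have h1 := Set.ncard_add_ncard_compl (Wf : Set V)
      have h2 : (Wf : Set V).ncard = k + 1 := by rw [Set.ncard_coe_finset, hWcard]
      omega
    have hcast : (((Nat.card V - (k+1) : ℕ)) : ℝ) = (Nat.card V : ℝ) - (k+1) := by
      have h3 : k + 1 ≤ Nat.card V := by omega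
      push_cast [h3]
      ring
    refine ⟨S, ?_, ?_⟩
    · rw [← Nat.cast_sum, hS, hval, hcast]
      linarith
    · rw [← Nat.cast_sum, hS, hval, hcast]
      linarith
  · push_neg at hsmall
    set m := ⌊α⌋₊ + 1 with hm
    have hfl : 1 ≤ ⌊α⌋₊ := (Nat.one_le_floor_iff α).mpr hα
    have hm2 : 2 ≤ m := by omega
    have hmle : (m : ℝ) ≤ α + 1 := by
      have h4 := Nat.floor_le (le_trans zero_le_one hα : (0:ℝ) ≤ α)
      rw [hm]; push_cast
      linarith
    have hαm : α < (m:ℝ) := by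
      have h5 := Nat.lt_floor_add_one α
      rw [hm]; push_cast
      linarith
    have ht := td.isTree
    obtain ⟨r⟩ := ht.isConnected.nonempty
    have hroot : m ≤ (TW.Ehat td r r).ncard := by
      have hsub : (td.bag r)ᶜ ⊆ TW.Ehat td r r := fun v hv => TW.Ehat_root hv
      have h1 : (td.bag r)ᶜ.ncard ≤ (TW.Ehat td r r).ncard :=
        Set.ncard_le_ncard hsub (Set.toFinite _)
      have h2 := Set.ncard_add_ncard_compl (td.bag r)
      have h3 := hbags r
      have h5 : ((m + k + 1 : ℕ) : ℝ) < (Nat.card V : ℝ) := by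
        have hc : ((m + k + 1 : ℕ) : ℝ) = (m:ℝ) + k + 1 := by push_cast; ring
        rw [hc]; linarith
      have h6 : m + k + 1 ≤ Nat.card V := by exact_mod_cast h5.le
      omega
    obtain ⟨W₀, U, hW₀, hUW₀, hclosed, hUge, hUle⟩ := TW.core ht td r hm2 hbags hroot
    have hUcast : (U.ncard : ℝ) ≤ 2*α := by
      have h7 : (U.ncard : ℝ) ≤ ((2*m - 2 : ℕ) : ℝ) := by exact_mod_cast hUle
      have h8 : ((2*m - 2 : ℕ) : ℝ) = 2*(m:ℝ) - 2 := by
        push_cast [(by omega : 2 ≤ 2*m)]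
        ring
      rw [h8] at h7
      linarith
    have hUn : U.ncard + k + 1 ≤ Nat.card V := by
      have h9 : ((U.ncard + k + 1 : ℕ) : ℝ) < (Nat.card V : ℝ) := by push_cast; linarith
      exact_mod_cast h9.le
    have hpad : (k + 1) - W₀.ncard ≤ ((U ∪ W₀)ᶜ).ncard := by
      have h8 := Set.ncard_add_ncard_compl (U ∪ W₀)
      have h9 := Set.ncard_union_le U W₀
      omega
    obtain ⟨pad, hpadsub, hpadcard⟩ := Set.exists_subset_card_eq hpad
    have hWpad : Disjoint W₀ pad := by
      rw [Set.disjoint_left]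
      intro v hv hvpad
      exact (hpadsub hvpad) (Or.inr hv)
    have hWcard : (W₀ ∪ pad).ncard = k + 1 := by
      rw [Set.ncard_union_eq hWpad (Set.toFinite _) (Set.toFinite _), hpadcard]
      omega
    have hWU : ∀ v ∈ U, v ∉ W₀ ∪ pad := by
      intro v hv hvW
      rcases hvW with h | h
      · exact (Set.disjoint_left.mp hUW₀ hv) h
      · exact (hpadsub h) (Or.inl hv)
    set Wf : Finset V := (Set.toFinite (W₀ ∪ pad)).toFinset with hWf
    have hWfcoe : (Wf : Set V) = W₀ ∪ pad := Set.Finite.coe_toFinset _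
    have hWfcard : Wf.card = k + 1 := by
      rw [← Set.ncard_eq_toFinset_card (W₀ ∪ pad) (Set.toFinite _)]
      exact hWcard
    refine ⟨Wf, hWfcard, ?_⟩
    obtain ⟨S, hS⟩ := TW.finisher Wf U
      (fun v hv hmem => hWU v hv (by rw [← hWfcoe]; exact Finset.mem_coe.mpr hmem))
      (fun v hv u hadj => by
        rcases hclosed v hv u hadj with h | h
        · exact Or.inl h
        · refine Or.inr (Finset.mem_coe.mp ?_)
          rw [hWfcoe]
          exact Or.inl h)
    refine ⟨S, ?_, ?_⟩
    · rw [← Nat.cast_sum, hS]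
      exact lt_of_lt_of_le hαm (by exact_mod_cast hUge)
    · rw [← Nat.cast_sum, hS]
      exact hUcast
end

section
/- For all integers k ≥ 1 and w ≥ 0, every real number α ≥ (2k+4)·(3/2)^w, and every graph G with |V(G)| > α + k + 1 and treewidth at most k, there exists a set W ⊆ V(G) with |W| ≤ (k+1)(w+1) such that for some set S of W-components of G, α < Σ_{C∈S} |V(C)| ≤ (1 + (2/3)^w)·α. -/
open SimpleGraph

section GreedyAux

lemma greedy_sel {ι : Type*} [DecidableEq ι] (M : ℝ) :
    ∀ (s : Finset ι) (f : ι → ℝ) (θ : ℝ), (∀ i ∈ s, 0 ≤ f i) → (∀ i ∈ s, f i ≤ M) →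
    (-M ≤ θ) → (θ < ∑ i ∈ s, f i) →
    ∃ t ⊆ s, θ < ∑ i ∈ t, f i ∧ ∑ i ∈ t, f i ≤ θ + M := by
  intro s
  induction s using Finset.induction_on with
  | empty =>
    intro f θ h0 hM hmθ htot
    exact ⟨∅, by simp, by simpa using htot, by simp at htot ⊢; linarith⟩
  | @insert a s ha ih =>
    intro f θ h0 hM hmθ htot
    by_cases hθ : θ < 0
    · exact ⟨∅, by simp, by simpa using hθ, by simp; linarith⟩
    push_neg at hθ
    by_cases hfa : θ < f a
    · refine ⟨{a}, by simp, by simpa using hfa, ?_⟩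
      have := hM a (Finset.mem_insert_self a s)
      simp only [Finset.sum_singleton]; linarith
    · push_neg at hfa
      have h0a := h0 a (Finset.mem_insert_self a s)
      have hMa := hM a (Finset.mem_insert_self a s)
      have htot' : θ - f a < ∑ i ∈ s, f i := by
        rw [Finset.sum_insert ha] at htot; linarith
      obtain ⟨t, hts, h1, h2⟩ := ih f (θ - f a)
        (fun i hi => h0 i (Finset.mem_insert_of_mem hi))
        (fun i hi => hM i (Finset.mem_insert_of_mem hi)) (by linarith) htot'
      refine ⟨insert a t, Finset.insert_subset_insert a hts, ?_, ?_⟩ <;>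
      · rw [Finset.sum_insert (fun h => ha (hts h))]
        linarith

end GreedyAux

section CsetAux
variable {V : Type} {G : SimpleGraph V}

/-- step relation avoiding B -/
def AStep (G : SimpleGraph V) (B : Set V) (a b : V) : Prop := G.Adj a b ∧ a ∉ B ∧ b ∉ B

lemma AStep.symm' {B : Set V} : Symmetric (AStep G B) :=
  fun _ _ h => ⟨h.1.symm, h.2.2, h.2.1⟩

def RA (G : SimpleGraph V) (B : Set V) (a b : V) : Prop := Relation.ReflTransGen (AStep G B) a b

lemma RA.trans {B : Set V} {a b c : V} (h : RA G B a b) (h' : RA G B b c) : RA G B a c :=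
  Relation.ReflTransGen.trans h h'

lemma RA.symm {B : Set V} {a b : V} (h : RA G B a b) : RA G B b a :=
  by
    unfold RA at h ⊢
    induction h with
    | refl => exact Relation.ReflTransGen.refl
    | tail _ hbc ih => exact Relation.ReflTransGen.head (AStep.symm' hbc) ih

def cset (G : SimpleGraph V) (B : Set V) (v : V) : Set V := {u | RA G B v u}

lemma mem_cset_self {B : Set V} {v : V} : v ∈ cset G B v := Relation.ReflTransGen.refl

lemma cset_not_mem_B {B : Set V} {v u : V} (hv : v ∉ B) (hu : u ∈ cset G B v) : u ∉ B := by
  cases (Relation.ReflTransGen.cases_tail hu) with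
  | inl h => exact h ▸ hv
  | inr h => exact h.choose_spec.2.2.2

lemma cset_eq_of_mem {B : Set V} {v u : V} (hu : u ∈ cset G B v) : cset G B u = cset G B v := by
  ext w
  exact ⟨fun hw => hu.trans hw, fun hw => (RA.symm hu).trans hw⟩

lemma cset_adj {B : Set V} {v u w : V} (hu : u ∈ cset G B v) (h : G.Adj u w)
    (hunB : u ∉ B) (hwB : w ∉ B) : w ∈ cset G B v :=
  Relation.ReflTransGen.tail hu ⟨h, hunB, hwB⟩

lemma cset_mono {B B' : Set V} (hBB : B ⊆ B') {v u : V} (hu : u ∈ cset G B' v) :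
    u ∈ cset G B v := by
  induction hu with
  | refl => exact mem_cset_self
  | tail _ h ih => exact Relation.ReflTransGen.tail ih ⟨h.1, fun hh => h.2.1 (hBB hh), fun hh => h.2.2 (hBB hh)⟩

lemma walk_RA {B : Set V} {a b : ↥Bᶜ} (p : (G.induce Bᶜ).Walk a b) : RA G B a.1 b.1 := by
  induction p with
  | nil => exact mem_cset_self
  | @cons x y z h p ih =>
    exact RA.trans (Relation.ReflTransGen.single ⟨h, x.2, y.2⟩) ih

/-- bridge: components of induced graph on Bᶜ correspond to cset -/
lemma bridge {B : Set V} {u : V} (hu : u ∈ Bᶜ) :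
    Subtype.val '' ((G.induce Bᶜ).connectedComponentMk ⟨u, hu⟩).supp = cset G B u := by
  ext v
  simp only [Set.mem_image, ConnectedComponent.mem_supp_iff, ConnectedComponent.eq]
  constructor
  · rintro ⟨⟨v', hv'⟩, hr, rfl⟩
    obtain ⟨p⟩ := hr
    exact (walk_RA p).symm
  · intro hv
    have hvB : v ∈ Bᶜ := cset_not_mem_B hu hv
    refine ⟨⟨v, hvB⟩, ?_, rfl⟩
    have key : ∀ w (hw : RA G B u w), (G.induce Bᶜ).Reachable ⟨u, hu⟩ ⟨w, cset_not_mem_B hu hw⟩ := by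
      intro w hw
      induction hw with
      | refl => exact Reachable.refl _
      | @tail b c hab hbc ih =>
        exact ih.trans (Adj.reachable (by exact hbc.1))
    exact (key v hv).symm

end CsetAux

section TreeAux
variable {ι : Type} [DecidableEq ι] {T : SimpleGraph ι}

def Conn (T : SimpleGraph ι) (t a b : ι) : Prop := ∃ p : T.Walk a b, t ∉ p.support

lemma Conn.refl {t a : ι} (h : a ≠ t) : Conn T t a a := ⟨Walk.nil, by simp [h.symm]⟩

lemma Conn.symm {t a b : ι} (h : Conn T t a b) : Conn T t b a := by
  obtain ⟨p, hp⟩ := h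
  exact ⟨p.reverse, by simpa using hp⟩

lemma Conn.trans {t a b c : ι} (h : Conn T t a b) (h' : Conn T t b c) : Conn T t a c := by
  obtain ⟨p, hp⟩ := h; obtain ⟨q, hq⟩ := h'
  exact ⟨p.append q, by rw [Walk.mem_support_append_iff]; tauto⟩

lemma Conn.ne_left {t a b : ι} (h : Conn T t a b) : a ≠ t := by
  obtain ⟨p, hp⟩ := h
  exact fun hh => hp (hh ▸ p.start_mem_support)

lemma Conn.ne_right {t a b : ι} (h : Conn T t a b) : b ≠ t := h.symm.ne_left

/-- unique door: two distinct neighbors of t cannot be connected avoiding t -/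
lemma unique_door (hT : T.IsTree) {t b c : ι} (hb : T.Adj t b) (hc : T.Adj t c)
    (h : Conn T t b c) : b = c := by
  by_contra hne
  obtain ⟨p, hp⟩ := h
  have hqt : t ∉ (p.toPath : T.Walk b c).support := fun hh => hp (Walk.support_toPath_subset p hh)
  set q : T.Path b c := p.toPath with hq
  have hP1 : ((q : T.Walk b c).cons hb).IsPath := q.2.cons hqt
  have hP2 : (Walk.cons hc Walk.nil : T.Walk t c).IsPath := by simp [hc.ne]
  have := hT.IsAcyclic.path_unique ⟨_, hP1⟩ ⟨_, hP2⟩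
  have hlen := congrArg (fun (r : T.Path t c) => (r : T.Walk t c).length) this
  simp only [Walk.length_cons, Walk.length_nil] at hlen
  have : 1 ≤ (q : T.Walk b c).length := by
    cases hql : (q : T.Walk b c).length with
    | zero => exact absurd (Walk.eq_of_length_eq_zero hql) hne
    | succ n => omega
  omega

/-- door exists: for t ≠ x there is a neighbor s of t, closer to x and connected to x avoiding t -/
lemma exists_door (hT : T.IsTree) {t x : ι} (h : t ≠ x) :
    ∃ s, T.Adj t s ∧ Conn T t s x ∧ T.dist s x + 1 = T.dist t x := by
  obtain ⟨p, hp⟩ := hT.isConnected.exists_walk_length_eq_dist t x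
  cases p with
  | nil => exact absurd rfl h
  | @cons _ s _ hadj q =>
    have hd : T.dist t x ≠ 0 := by
      exact Nat.pos_iff_ne_zero.mp (hT.isConnected.pos_dist_of_ne h)
    simp only [Walk.length_cons] at hp
    have hq : q.length = T.dist t x - 1 := by omega
    have hds : T.dist s x ≤ T.dist t x - 1 := hq ▸ T.dist_le q
    have htq : t ∉ q.support := by
      intro hh
      have := T.dist_le (q.dropUntil t hh)
      have hle : (q.dropUntil t hh).length ≤ q.length := by
        have := congrArg Walk.length (q.take_spec hh)
        rw [Walk.length_append] at this
        omega
      omega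
    have hdt : T.dist t x ≤ T.dist t s + T.dist s x := hT.isConnected.dist_triangle
    have h1 : T.dist t s ≤ 1 := T.dist_le (Walk.cons hadj Walk.nil) |>.trans (by simp)
    refine ⟨s, hadj, ⟨q, htq⟩, by omega⟩

/-- any walk from y to t, where y is connected to x avoiding t, passes through the door s -/
lemma door_blocks (hT : T.IsTree) {t x s y : ι} (hs : T.Adj t s) (hsx : Conn T t s x)
    (hyx : Conn T t y x) (W : T.Walk y t) : s ∈ W.support := by
  have hyt : y ≠ t := hyx.ne_left
  have hsub := Walk.support_toPath_subset W
  set p : T.Path y t := W.toPath with hp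
  suffices hsp : s ∈ (p : T.Walk y t).support from hsub hsp
  -- reverse path from t to y
  have hrev : ((p : T.Walk y t).reverse).IsPath := p.2.reverse
  cases hrw : (p : T.Walk y t).reverse with
  | nil => exact absurd rfl hyt
  | @cons _ z _ hadj q =>
    have hq : ((p:T.Walk y t).reverse).IsPath := p.2.reverse
    rw [hrw] at hq
    have htq : t ∉ q.support := by
      have := hq.support_nodup
      simp only [Walk.support_cons, List.nodup_cons] at this
      exact this.1
    have hzy : Conn T t z y := ⟨q, htq⟩
    have : z = s := unique_door hT hadj hs (hzy.trans (hyx.trans hsx.symm))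
    have hz' : z ∈ ((p : T.Walk y t).reverse).support := by
      rw [hrw]; simp
    rw [Walk.support_reverse, List.mem_reverse] at hz'
    exact this ▸ hz'

end TreeAux

section CoreAux
variable {V ι : Type} [DecidableEq ι] {G : SimpleGraph V} {T : SimpleGraph ι}

noncomputable def SmallSet (G : SimpleGraph V) (B : Set V) (X : Set V) (θ : ℝ) : Set V :=
  {u | u ∉ B ∧ ((cset G B u ∩ X).ncard : ℝ) ≤ θ}

/-- walk in T along which v's bag property holds -/
lemma bag_walk (td : TreeDecomp G T) {v : V} {x y : ι} (hx : v ∈ td.bag x)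
    (hy : v ∈ td.bag y) : ∃ p : T.Walk x y, ∀ z ∈ p.support, v ∈ td.bag z := by
  have h := td.bag_connected v
  obtain ⟨p⟩ := h ⟨x, hx⟩ ⟨y, hy⟩
  refine ⟨p.map ⟨Subtype.val, fun h => h⟩, ?_⟩
  intro z hz
  rw [Walk.support_map, List.mem_map] at hz
  obtain ⟨⟨z', hz'⟩, _, rfl⟩ := hz
  exact hz'

lemma conn_of_bags (td : TreeDecomp G T) {t x y : ι} {v : V} (hvt : v ∉ td.bag t)
    (hx : v ∈ td.bag x) (hy : v ∈ td.bag y) : Conn T t x y := by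
  obtain ⟨p, hp⟩ := bag_walk td hx hy
  exact ⟨p, fun h => hvt (hp t h)⟩

/-- all bags of vertices in a component of G - bag t are connected avoiding t -/
lemma comp_bags_conn (td : TreeDecomp G T) {t : ι} {v₀ : V} (hv₀ : v₀ ∉ td.bag t)
    {x : ι} (hx : v₀ ∈ td.bag x) {u : V} (hu : u ∈ cset G (td.bag t) v₀)
    {y : ι} (hy : u ∈ td.bag y) : Conn T t y x := by
  induction hu generalizing y with
  | refl => exact conn_of_bags td hv₀ hy hx
  | @tail b c hab hbc ih =>
    obtain ⟨z, hzb, hzc⟩ := td.bag_edge hbc.1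
    exact (conn_of_bags td hbc.2.2 hy hzc).trans (ih hzb)

lemma core [Fintype V] (td : TreeDecomp G T) (k : ℕ) (hbags : ∀ x, (td.bag x).ncard ≤ k+1)
    (X : Set V) (τ : ℝ)
    (c d : ℕ) (t : ι) (v₀ : V) (x : ι) (hv₀ : v₀ ∉ td.bag t) (hx : v₀ ∈ td.bag x)
    (hbig : τ + (k+1) < ((cset G (td.bag t) v₀ ∩ X).ncard : ℝ))
    (hc : (cset G (td.bag t) v₀).ncard ≤ c) (hd : T.dist t x ≤ d) :
    ∃ t', τ < (((SmallSet G (td.bag t') X (τ+(k+1))) ∩ X).ncard : ℝ) := by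
  have hT := td.isTree
  have htx : t ≠ x := fun h => hv₀ (h ▸ hx)
  have hd1 : 1 ≤ d := le_trans (hT.isConnected.pos_dist_of_ne htx) hd
  obtain ⟨s, hadj, hsx, hdist⟩ := exists_door hT htx
  set C := cset G (td.bag t) v₀ with hC
  by_cases hbigex : ∃ u, u ∈ C ∧ u ∉ td.bag s ∧ τ + (k+1) < ((cset G (td.bag s) u ∩ X).ncard : ℝ)
  · -- case ii : recurse
    obtain ⟨u₁, hu₁C, hu₁s, hu₁big⟩ := hbigex
    -- the new component is contained in C
    have hinv : ∀ u, RA G (td.bag s) u₁ u → u ∈ C := by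
      intro u hu
      induction hu with
      | refl => exact hu₁C
      | @tail b c' hab hbc ih =>
        have hbt : b ∉ td.bag t := cset_not_mem_B hv₀ ih
        by_cases hct : c' ∈ td.bag t
        · exfalso
          obtain ⟨y, hyb, hyc⟩ := td.bag_edge hbc.1
          have hyx : Conn T t y x := comp_bags_conn td hv₀ hx ih hyb
          obtain ⟨W, hW⟩ := bag_walk td hyc hct
          have := door_blocks hT hadj hsx hyx W
          exact hbc.2.2 (hW s this)
        · exact cset_adj ih hbc.1 hbt hct
    have hsub : cset G (td.bag s) u₁ ⊆ C := fun u hu => hinv u hu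
    by_cases hCC : cset G (td.bag s) u₁ = C
    · -- same component: move closer to x
      have hv₀s : v₀ ∉ td.bag s := by
        have hv₀C' : v₀ ∈ cset G (td.bag s) u₁ := hCC ▸ mem_cset_self
        exact cset_not_mem_B hu₁s hv₀C'
      have hv₀C' : v₀ ∈ cset G (td.bag s) u₁ := hCC ▸ mem_cset_self
      have heq : cset G (td.bag s) v₀ = C := (cset_eq_of_mem hv₀C').trans hCC
      have hbig' : τ + (k+1) < ((cset G (td.bag s) v₀ ∩ X).ncard : ℝ) := by
        rw [heq, ← hCC]; exact hu₁big
      exact core td k hbags X τ c (d-1) s v₀ x hv₀s hx hbig' (by rw [heq]; exact hc) (by omega)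
    · -- strictly smaller component
      have hlt : (cset G (td.bag s) u₁).ncard < c := by
        refine lt_of_lt_of_le ?_ hc
        exact Set.ncard_lt_ncard (ssubset_of_subset_of_ne hsub hCC) C.toFinite
      obtain ⟨x', hx'⟩ : ∃ x', u₁ ∈ td.bag x' := by
        obtain ⟨⟨x', hx'⟩⟩ := (td.bag_connected u₁).nonempty
        exact ⟨x', hx'⟩
      exact core td k hbags X τ ((cset G (td.bag s) u₁).ncard) (T.dist s x') s u₁ x'
        hu₁s hx' hu₁big le_rfl le_rfl
  · -- case i : the door s is a good node
    push_neg at hbigex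
    refine ⟨s, ?_⟩
    have hsml : (C \ td.bag s) ∩ X ⊆ (SmallSet G (td.bag s) X (τ+(k+1))) ∩ X := by
      rintro u ⟨⟨huC, hus⟩, huX⟩
      exact ⟨⟨hus, hbigex u huC hus⟩, huX⟩
    have h1 : ((C ∩ X) ∩ td.bag s).ncard + ((C ∩ X) \ td.bag s).ncard = (C ∩ X).ncard :=
      Set.ncard_inter_add_ncard_diff_eq_ncard (C ∩ X) (td.bag s) (Set.toFinite _)
    have h2 : ((C ∩ X) ∩ td.bag s).ncard ≤ k + 1 :=
      le_trans (Set.ncard_le_ncard Set.inter_subset_right (td.bag s).toFinite) (hbags s)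
    have h3 : ((C \ td.bag s) ∩ X).ncard = ((C ∩ X) \ td.bag s).ncard := by
      congr 1; ext z; simp only [Set.mem_inter_iff, Set.mem_diff]; tauto
    have h4 : ((C \ td.bag s) ∩ X).ncard ≤ ((SmallSet G (td.bag s) X (τ+(k+1))) ∩ X).ncard :=
      Set.ncard_le_ncard hsml (Set.toFinite _)
    have hcast : ((C ∩ X).ncard : ℝ) ≤ (((C \ td.bag s) ∩ X).ncard : ℝ) + (k+1) := by
      rw [h3]
      push_cast [← h1]
      have : ((((C ∩ X) ∩ td.bag s).ncard : ℝ)) ≤ (k+1 : ℝ) := by exact_mod_cast h2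
      linarith
    have hfin : (τ : ℝ) + (k+1) < (((C \ td.bag s) ∩ X).ncard : ℝ) + (k+1) := lt_of_lt_of_le hbig hcast
    have : (τ : ℝ) < (((C \ td.bag s) ∩ X).ncard : ℝ) := by linarith
    calc (τ : ℝ) < (((C \ td.bag s) ∩ X).ncard : ℝ) := this
      _ ≤ _ := by exact_mod_cast h4
termination_by (c, d)
decreasing_by
  · exact Prod.Lex.right c (by omega)
  · exact Prod.Lex.left _ _ hlt

end CoreAux

section GoodNode
variable {V : Type} {G : SimpleGraph V}

lemma goodnode [Fintype V] (G : SimpleGraph V) (k : ℕ) (htw : HasTreewidthLE G k)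
    (X : Set V) (τ : ℝ) (hτ : 0 ≤ τ) (hX : τ + (k+1) < (X.ncard : ℝ)) :
    ∃ B : Set V, B.ncard ≤ k + 1 ∧
      τ < (((SmallSet G B X (τ+(k+1))) ∩ X).ncard : ℝ) := by
  classical
  obtain ⟨ι, T, td, hbags⟩ := htw
  letI : DecidableEq ι := Classical.decEq ι
  have hk0 : (0:ℝ) ≤ k := Nat.cast_nonneg k
  have hXne : X.Nonempty := by
    rw [Set.nonempty_iff_ne_empty]
    intro h
    rw [h, Set.ncard_empty] at hX
    push_cast at hX
    linarith
  obtain ⟨v, hv⟩ := hXne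
  obtain ⟨⟨t₀, ht₀⟩⟩ := (td.bag_connected v).nonempty
  by_cases hgood : τ < (((SmallSet G (td.bag t₀) X (τ+(k+1))) ∩ X).ncard : ℝ)
  · exact ⟨td.bag t₀, hbags t₀, hgood⟩
  · push_neg at hgood
    -- find a big component
    have hbigex : ∃ v₀, v₀ ∈ X ∧ v₀ ∉ td.bag t₀ ∧
        τ + (k+1) < ((cset G (td.bag t₀) v₀ ∩ X).ncard : ℝ) := by
      by_contra hno
      push_neg at hno
      have hsub : X ⊆ td.bag t₀ ∪ ((SmallSet G (td.bag t₀) X (τ+(k+1))) ∩ X) := by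
        intro u hu
        by_cases h1 : u ∈ td.bag t₀
        · exact Or.inl h1
        · exact Or.inr ⟨⟨h1, hno u hu h1⟩, hu⟩
      have h2 : X.ncard ≤ (td.bag t₀).ncard
          + ((SmallSet G (td.bag t₀) X (τ+(k+1))) ∩ X).ncard := by
        refine le_trans (Set.ncard_le_ncard hsub (Set.toFinite _)) ?_
        exact Set.ncard_union_le _ _
      have h3 : ((td.bag t₀).ncard : ℝ) ≤ (k:ℝ)+1 := by exact_mod_cast hbags t₀
      have h4 : ((X.ncard : ℕ) : ℝ) ≤ ((td.bag t₀).ncard : ℝ)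
          + (((SmallSet G (td.bag t₀) X (τ+(k+1))) ∩ X).ncard : ℝ) := by exact_mod_cast h2
      linarith
    obtain ⟨v₀, hv₀X, hv₀b, hv₀big⟩ := hbigex
    obtain ⟨⟨x, hx⟩⟩ := (td.bag_connected v₀).nonempty
    obtain ⟨t', ht'⟩ := core td k hbags X τ ((cset G (td.bag t₀) v₀).ncard) (T.dist t₀ x)
      t₀ v₀ x hv₀b hx hv₀big le_rfl le_rfl
    exact ⟨td.bag t', hbags t', ht'⟩
end GoodNode

section VsetAux
variable {V : Type} {G : SimpleGraph V}

/-- the vertex set of a component of G - B, as a subset of V -/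
def vset {B : Set V} (c : (G.induce Bᶜ).ConnectedComponent) : Set V := Subtype.val '' c.supp

lemma vset_ncard {B : Set V} (c : (G.induce Bᶜ).ConnectedComponent) :
    c.supp.ncard = (vset c).ncard :=
  (Set.ncard_image_of_injective _ Subtype.val_injective).symm

lemma vset_subset_compl {B : Set V} (c : (G.induce Bᶜ).ConnectedComponent) : vset c ⊆ Bᶜ := by
  rintro u ⟨⟨u', hu'⟩, _, rfl⟩; exact hu'

lemma vset_mk {B : Set V} {u : V} (hu : u ∈ Bᶜ) :
    vset ((G.induce Bᶜ).connectedComponentMk ⟨u, hu⟩) = cset G B u := bridge hu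

lemma vset_eq_cset {B : Set V} {c : (G.induce Bᶜ).ConnectedComponent} {u : V}
    (hu : u ∈ vset c) : ∃ hu' : u ∈ Bᶜ, vset c = cset G B u := by
  obtain ⟨⟨u', hu'⟩, hsupp, rfl⟩ := hu
  refine ⟨hu', ?_⟩
  rw [ConnectedComponent.mem_supp_iff] at hsupp
  rw [← hsupp, vset_mk]

lemma vset_nonempty {B : Set V} (c : (G.induce Bᶜ).ConnectedComponent) :
    ∃ u, u ∈ vset c := by
  obtain ⟨⟨u, hu⟩, hrep⟩ := c.exists_rep
  exact ⟨u, ⟨⟨u, hu⟩, by rw [ConnectedComponent.mem_supp_iff]; exact hrep, rfl⟩⟩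

lemma vset_disjoint {B : Set V} {c c' : (G.induce Bᶜ).ConnectedComponent} (h : c ≠ c') :
    Disjoint (vset c) (vset c') := by
  rw [Set.disjoint_left]
  rintro u hu hu'
  obtain ⟨⟨a, ha⟩, hs, rfl⟩ := hu
  obtain ⟨⟨a', _⟩, hs', heq⟩ := hu'
  cases Subtype.val_injective heq
  rw [ConnectedComponent.mem_supp_iff] at hs hs'
  exact h (hs ▸ hs')

lemma sum_vset_ncard [Fintype V] {B : Set V} (S : Finset ((G.induce Bᶜ).ConnectedComponent)) :
    ∑ c ∈ S, c.supp.ncard = (⋃ c ∈ S, vset c).ncard := by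
  classical
  induction S using Finset.induction_on with
  | empty => simp
  | @insert a S ha ih =>
    rw [Finset.sum_insert ha, ih, Finset.set_biUnion_insert]
    rw [vset_ncard, Set.ncard_union_eq ?_ (Set.toFinite _) (Set.toFinite _)]
    · rw [Set.disjoint_iUnion₂_right]
      intro c hc
      exact vset_disjoint (fun h => ha (h ▸ hc))
lemma cset_small_closed {B X : Set V} {θ : ℝ} {u : V} (hu : u ∈ SmallSet G B X θ) :
    cset G B u ⊆ SmallSet G B X θ := by
  intro u' hu'
  refine ⟨cset_not_mem_B hu.1 hu', ?_⟩
  rw [cset_eq_of_mem hu']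
  exact hu.2

lemma cast_sum_ncard [Fintype V] {B : Set V} (S : Finset ((G.induce Bᶜ).ConnectedComponent)) :
    ∑ c ∈ S, (c.supp.ncard : ℝ) = (((⋃ c ∈ S, vset c).ncard : ℕ) : ℝ) := by
  rw [← sum_vset_ncard S]; push_cast; rfl
end VsetAux

lemma st13_main (k : ℕ) (hk : 1 ≤ k) (w : ℕ) : ∀ {V : Type} [Fintype V] (G : SimpleGraph V)
    (α : ℝ), ((2*k+4:ℝ) * (3/2:ℝ)^w ≤ α) → (α + k + 1 < (Nat.card V : ℝ)) →
    HasTreewidthLE G k →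
    ∃ W : Finset V, W.card ≤ (k+1)*(w+1) ∧
      ∃ S : Finset ((G.induce ((W:Set V)ᶜ)).ConnectedComponent),
        (α < ∑ c ∈ S, (c.supp.ncard:ℝ)) ∧
        ∑ c ∈ S, (c.supp.ncard:ℝ) ≤ (1+(2/3:ℝ)^w)*α := by
  induction w with
  | zero =>
    intro V _ G α hα hcard htw
    classical
    simp only [pow_zero, mul_one] at hα
    have hk1 : (1:ℝ) ≤ k := by exact_mod_cast hk
    have hα0 : (0:ℝ) < α := by linarith
    obtain ⟨B, hBcard, hgood⟩ := goodnode G k htw Set.univ α (le_of_lt hα0)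
      (by rw [Set.ncard_univ]; push_cast; linarith)
    set θ : ℝ := α + ((k:ℝ)+1) with hθ
    set Wf : Finset V := (Set.toFinite B).toFinset with hWf
    have hWco : (↑Wf : Set V) = B := Set.Finite.coe_toFinset _
    have hWcard : Wf.card ≤ (k+1) * (0+1) := by
      have h := Set.ncard_coe_finset Wf
      rw [hWco] at h; omega
    letI : Fintype ((G.induce ((↑Wf : Set V)ᶜ)).ConnectedComponent) := Fintype.ofFinite _
    set Sm := SmallSet G B Set.univ θ with hSm
    set pool : Finset ((G.induce ((↑Wf:Set V)ᶜ)).ConnectedComponent) :=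
      Finset.univ.filter (fun c => vset c ⊆ Sm) with hpool
    have hcset_eq : ∀ u : V, cset G (↑Wf : Set V) u = cset G B u := by
      intro u; rw [hWco]
    have hcover : Sm ⊆ ⋃ c ∈ pool, vset c := by
      intro u hu
      have huB : u ∈ ((↑Wf:Set V))ᶜ := by rw [hWco]; exact hu.1
      have hvc : vset ((G.induce ((↑Wf:Set V)ᶜ)).connectedComponentMk ⟨u, huB⟩)
          = cset G B u := by rw [vset_mk, hcset_eq]
      have hmem : (G.induce ((↑Wf:Set V)ᶜ)).connectedComponentMk ⟨u, huB⟩ ∈ pool := by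
        rw [hpool, Finset.mem_filter]
        exact ⟨Finset.mem_univ _, by rw [hvc]; exact cset_small_closed hu⟩
      refine Set.mem_biUnion hmem ?_
      rw [hvc]; exact mem_cset_self
    have hsum_lb : α < ∑ c ∈ pool, (c.supp.ncard:ℝ) := by
      rw [cast_sum_ncard pool]
      have h2 : (Sm ∩ Set.univ).ncard ≤ (⋃ c ∈ pool, vset c).ncard :=
        Set.ncard_le_ncard (by rw [Set.inter_univ]; exact hcover) (Set.toFinite _)
      have : ((Sm ∩ Set.univ).ncard : ℝ) ≤ (((⋃ c ∈ pool, vset c).ncard : ℕ) : ℝ) := by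
        exact_mod_cast h2
      linarith [hgood]
    have hub : ∀ c ∈ pool, (c.supp.ncard:ℝ) ≤ θ := by
      intro c hc
      obtain ⟨u, hu⟩ := vset_nonempty c
      obtain ⟨hu', hvc⟩ := vset_eq_cset hu
      have huSm : u ∈ Sm := (Finset.mem_filter.mp hc).2 hu
      have hsub : vset c ⊆ cset G B u ∩ Set.univ := by
        rw [Set.inter_univ, ← hcset_eq, ← hvc]
      have h3 : (vset c).ncard ≤ (cset G B u ∩ Set.univ).ncard :=
        Set.ncard_le_ncard hsub (Set.toFinite _)
      have h4 : ((vset c).ncard : ℝ) ≤ ((cset G B u ∩ Set.univ).ncard : ℝ) := by exact_mod_cast h3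
      rw [vset_ncard c]
      exact le_trans h4 huSm.2
    have hgoal2 : (1+(2/3:ℝ)^0)*α = 2*α := by norm_num
    by_cases hbig1 : ∃ c ∈ pool, α < (c.supp.ncard:ℝ)
    · obtain ⟨c, hcp, hcα⟩ := hbig1
      refine ⟨Wf, hWcard, {c}, by simpa using hcα, ?_⟩
      rw [Finset.sum_singleton, hgoal2]
      have := hub c hcp
      have hkα : (k:ℝ)+1 ≤ α := by linarith
      linarith
    · push_neg at hbig1
      obtain ⟨S, hSsub, hS1, hS2⟩ := greedy_sel α pool (fun c => (c.supp.ncard:ℝ)) α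
        (fun c _ => by positivity) hbig1 (by linarith) hsum_lb
      exact ⟨Wf, hWcard, S, hS1, by rw [hgoal2]; linarith⟩
  | succ w ih =>
    intro V _ G α hα hcard htw
    classical
    have hk1 : (1:ℝ) ≤ k := by exact_mod_cast hk
    have hα_w : (2*(k:ℝ)+4) * (3/2:ℝ)^w ≤ α := by
      refine le_trans ?_ hα
      have h32 : ((3:ℝ)/2)^w ≤ (3/2:ℝ)^(w+1) :=
        pow_le_pow_right₀ (by norm_num) (Nat.le_succ w)
      nlinarith [h32, hk1]
    obtain ⟨Wt, hWtcard, St, h1, h2⟩ := ih G α hα_w hcard htw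
    set ε : ℝ := (2/3:ℝ)^w with hε
    clear_value ε
    have hε0 : (0:ℝ) < ε := by rw [hε]; positivity
    have hε1 : ε ≤ 1 := by rw [hε]; exact pow_le_one₀ (by norm_num) (by norm_num)
    have hmulpow : (2/3:ℝ)^w * (3/2:ℝ)^w = 1 := by
      rw [← mul_pow]; norm_num
    have hεα : 3*(k:ℝ)+6 ≤ ε*α := by
      have e1 : ε * ((2*(k:ℝ)+4) * (3/2:ℝ)^(w+1)) = ((2/3:ℝ)^w*(3/2:ℝ)^w) * ((3/2)*(2*(k:ℝ)+4)) := by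
        rw [hε, pow_succ]; ring
      rw [hmulpow, one_mul] at e1
      have e2 : ε * ((2*(k:ℝ)+4) * (3/2:ℝ)^(w+1)) ≤ ε*α :=
        mul_le_mul_of_nonneg_left hα hε0.le
      nlinarith
    have hα0 : (0:ℝ) < α := by nlinarith
    have hαlb : 3*(k:ℝ)+6 ≤ α := by nlinarith
    set sSt := ∑ c ∈ St, (c.supp.ncard:ℝ) with hsSt
    clear_value sSt
    have hpow : (2/3:ℝ)^(w+1) = ε*(2/3) := by rw [hε, pow_succ]
    by_cases hdone : sSt ≤ (1 + ε*(2/3))*α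
    · refine ⟨Wt, ?_, St, by rw [← hsSt]; exact h1, ?_⟩
      · calc Wt.card ≤ (k+1)*(w+1) := hWtcard
          _ ≤ (k+1)*(w+1+1) := Nat.mul_le_mul_left _ (by omega)
      · rw [hpow, ← hsSt]; exact hdone
    · push_neg at hdone
      set X : Set V := ⋃ c ∈ St, vset c with hX
      have hXW : ∀ u ∈ X, u ∉ (↑Wt : Set V) := by
        intro u hu
        rw [hX] at hu
        simp only [Set.mem_iUnion] at hu
        obtain ⟨c, _, hc⟩ := hu
        exact (vset_subset_compl c) hc
      have hXsum : ((X.ncard : ℕ) : ℝ) = sSt := by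
        rw [hsSt, cast_sum_ncard St, hX]
      have hXclass : ∀ u, u ∈ X → cset G (↑Wt : Set V) u ⊆ X := by
        intro u hu
        rw [hX] at hu
        simp only [Set.mem_iUnion] at hu
        obtain ⟨c, hcS, hc⟩ := hu
        obtain ⟨hu', hvc⟩ := vset_eq_cset hc
        intro y hy
        rw [hX]
        simp only [Set.mem_iUnion]
        refine ⟨c, hcS, ?_⟩
        rw [hvc]
        exact hy
      set lo : ℝ := sSt - (1+ε*(2/3))*α with hlo
      clear_value lo
      have hlo0 : (0:ℝ) < lo := by rw [hlo]; linarith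
      have hloub : lo ≤ ε*α/3 := by rw [hlo]; linarith
      have hexp : (1+ε*(2/3))*α = α + (2/3)*(ε*α) := by ring
      obtain ⟨B, hBcard, hgood⟩ := goodnode G k htw X lo hlo0.le
        (by rw [hXsum]; linarith [hεα, hαlb, hexp, hlo])
      set Wb : Finset V := (Set.toFinite B).toFinset with hWb
      set Wf : Finset V := Wt ∪ Wb with hWfdef
      have hWco : (↑Wf : Set V) = (↑Wt : Set V) ∪ B := by
        rw [hWfdef, Finset.coe_union, hWb, Set.Finite.coe_toFinset]
      have hWcard : Wf.card ≤ (k+1)*(w+1+1) := by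
        have hu : Wf.card ≤ Wt.card + Wb.card := by
          rw [hWfdef]; exact Finset.card_union_le Wt Wb
        have hwb : Wb.card = B.ncard := by
          rw [← Set.ncard_coe_finset Wb, hWb, Set.Finite.coe_toFinset]
        have hm : (k+1)*(w+1+1) = (k+1)*(w+1) + (k+1) := by ring
        omega
      letI : Fintype ((G.induce ((↑Wf:Set V)ᶜ)).ConnectedComponent) := Fintype.ofFinite _
      set θ' : ℝ := lo + ((k:ℝ)+1) with hθ'
      clear_value θ'
      set Sm := SmallSet G B X θ' with hSm
      have hWtsub : (↑Wt:Set V) ⊆ (↑Wf:Set V) := by rw [hWco]; exact Set.subset_union_left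
      have hBsub : B ⊆ (↑Wf:Set V) := by rw [hWco]; exact Set.subset_union_right
      have hcompl : ∀ u, u ∈ X → u ∉ B → u ∈ ((↑Wf:Set V))ᶜ := by
        intro u huX huB
        rw [Set.mem_compl_iff, hWco]
        rintro (h|h)
        exacts [hXW u huX h, huB h]
      have hvsub : ∀ u (hu : u ∈ ((↑Wf:Set V))ᶜ), u ∈ X →
          vset ((G.induce ((↑Wf:Set V)ᶜ)).connectedComponentMk ⟨u,hu⟩) ⊆ X := by
        intro u hu huX
        rw [vset_mk]
        exact fun y hy => hXclass u huX (cset_mono hWtsub hy)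
      set pool : Finset ((G.induce ((↑Wf:Set V)ᶜ)).ConnectedComponent) :=
        Finset.univ.filter (fun c => vset c ⊆ X) with hpooldef
      set spool : Finset ((G.induce ((↑Wf:Set V)ᶜ)).ConnectedComponent) :=
        pool.filter (fun c => vset c ⊆ Sm) with hspooldef
      have hpool_union : ⋃ c ∈ pool, vset c = X \ (↑Wf:Set V) := by
        apply Set.Subset.antisymm
        · intro y hy
          simp only [Set.mem_iUnion] at hy
          obtain ⟨c, hc, hyc⟩ := hy
          exact ⟨(Finset.mem_filter.mp hc).2 hyc, vset_subset_compl c hyc⟩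
        · rintro u ⟨huX, huW⟩
          have hu : u ∈ ((↑Wf:Set V))ᶜ := huW
          have hmem : (G.induce ((↑Wf:Set V)ᶜ)).connectedComponentMk ⟨u,hu⟩ ∈ pool :=
            Finset.mem_filter.mpr ⟨Finset.mem_univ _, hvsub u hu huX⟩
          refine Set.mem_biUnion hmem ?_
          rw [vset_mk]
          exact mem_cset_self
      have hsplit := Set.ncard_inter_add_ncard_diff_eq_ncard X (↑Wf:Set V) (Set.toFinite _)
      set b : ℝ := ((X ∩ (↑Wf:Set V)).ncard : ℝ) with hb
      clear_value b
      have hpool_sum : ∑ c ∈ pool, (c.supp.ncard:ℝ) = sSt - b := by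
        rw [cast_sum_ncard pool, hpool_union]
        have hc2 : ((X ∩ (↑Wf:Set V)).ncard:ℝ) + ((X \ (↑Wf:Set V)).ncard:ℝ) = ((X.ncard:ℕ):ℝ) := by
          exact_mod_cast hsplit
        rw [hb]
        linarith [hXsum]
      have hb0 : (0:ℝ) ≤ b := by rw [hb]; positivity
      have hble : b ≤ (k:ℝ)+1 := by
        have hXB : X ∩ (↑Wf:Set V) ⊆ B := by
          rw [hWco]
          rintro u ⟨huX, (h|h)⟩
          exacts [absurd h (hXW u huX), h]
        have h5 := Set.ncard_le_ncard hXB (Set.toFinite _)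
        have h6 : ((X ∩ (↑Wf:Set V)).ncard:ℝ) ≤ (B.ncard:ℝ) := by exact_mod_cast h5
        have h7 : (B.ncard:ℝ) ≤ (k:ℝ)+1 := by exact_mod_cast hBcard
        rw [hb]; linarith
      have hspool_ub : ∀ c ∈ spool, (c.supp.ncard:ℝ) ≤ θ' := by
        intro c hc
        obtain ⟨u, hu⟩ := vset_nonempty c
        obtain ⟨hu', hvc⟩ := vset_eq_cset hu
        have huSm : u ∈ Sm := (Finset.mem_filter.mp hc).2 hu
        have hsub2 : vset c ⊆ cset G B u ∩ X := by
          intro y hy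
          refine ⟨?_, (Finset.mem_filter.mp ((Finset.mem_filter.mp hc).1)).2 hy⟩
          rw [hvc] at hy
          exact cset_mono hBsub hy
        have h3 := Set.ncard_le_ncard hsub2 (Set.toFinite _)
        have h4 : ((vset c).ncard:ℝ) ≤ ((cset G B u ∩ X).ncard:ℝ) := by exact_mod_cast h3
        rw [vset_ncard c]
        exact le_trans h4 huSm.2
      have hspool_lb : lo < ∑ c ∈ spool, (c.supp.ncard:ℝ) := by
        have hcov2 : Sm ∩ X ⊆ ⋃ c ∈ spool, vset c := by
          rintro u ⟨huSm, huX⟩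
          have hu : u ∈ ((↑Wf:Set V))ᶜ := hcompl u huX huSm.1
          have hvm : vset ((G.induce ((↑Wf:Set V)ᶜ)).connectedComponentMk ⟨u,hu⟩)
              = cset G (↑Wf:Set V) u := vset_mk hu
          have hsubX := hvsub u hu huX
          have hsubSm : vset ((G.induce ((↑Wf:Set V)ᶜ)).connectedComponentMk ⟨u,hu⟩) ⊆ Sm := by
            rw [hvm]
            exact fun y hy => cset_small_closed huSm (cset_mono hBsub hy)
          have hmem : (G.induce ((↑Wf:Set V)ᶜ)).connectedComponentMk ⟨u,hu⟩ ∈ spool :=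
            Finset.mem_filter.mpr ⟨Finset.mem_filter.mpr ⟨Finset.mem_univ _, hsubX⟩, hsubSm⟩
          refine Set.mem_biUnion hmem ?_
          rw [hvm]
          exact mem_cset_self
        have h8 := Set.ncard_le_ncard hcov2 (Set.toFinite _)
        have h9 : ((Sm ∩ X).ncard:ℝ) ≤ (((⋃ c ∈ spool, vset c).ncard:ℕ):ℝ) := by exact_mod_cast h8
        rw [cast_sum_ncard spool]
        linarith [hgood]
      obtain ⟨F, hFsub, hF1, hF2⟩ := greedy_sel θ' spool (fun c => (c.supp.ncard:ℝ)) (lo - b)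
        (fun c _ => by positivity) hspool_ub (by rw [hθ']; linarith) (by linarith)
      have hFpool : F ⊆ pool := hFsub.trans (Finset.filter_subset _ _)
      have hsd : ∑ c ∈ pool \ F, (c.supp.ncard:ℝ)
          = (∑ c ∈ pool, (c.supp.ncard:ℝ)) - (∑ c ∈ F, (c.supp.ncard:ℝ)) :=
        Finset.sum_sdiff_eq_sub hFpool
      refine ⟨Wf, hWcard, pool \ F, ?_, ?_⟩
      · rw [hsd, hpool_sum]
        have hθ'' : θ' = lo + ((k:ℝ)+1) := hθ'
        linarith [hF2, hloub, hεα, hexp, hlo, hθ', hb0, hble]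
      · rw [hsd, hpool_sum, hpow]
        linarith [hF1, hlo, hb0, hexp]

theorem statement_13 (k w : ℕ) (hk : 1 ≤ k) (α : ℝ)
    (hα : (2 * k + 4 : ℝ) * (3/2 : ℝ) ^ w ≤ α)
    {V : Type} [Fintype V] (G : SimpleGraph V)
    (hcard : α + k + 1 < (Nat.card V : ℝ)) (htw : HasTreewidthLE G k) :
    ∃ W : Finset V, W.card ≤ (k + 1) * (w + 1) ∧
      ∃ S : Finset ((G.induce ((W : Set V)ᶜ)).ConnectedComponent),
        α < ∑ c ∈ S, ((c.supp.ncard : ℝ)) ∧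
        ∑ c ∈ S, ((c.supp.ncard : ℝ)) ≤ (1 + (2/3 : ℝ) ^ w) * α := by
  obtain ⟨W, h1, S, h2, h3⟩ := st13_main k hk w G α hα hcard htw
  exact ⟨W, h1, S, h2, h3⟩
end

section
/- For all integers k ≥ 1 and w ≥ 0, log₂(3/2)·w + log₂(2k+4) ≤ p_{w,k} ≤ w + log_{3/2}(6k+12). -/
open SimpleGraph

theorem statement_14 (k w : ℕ) (hk : 1 ≤ k) :
    Real.logb 2 (3/2) * w + Real.logb 2 (2 * k + 4) ≤ (pWK k w : ℝ) ∧
    (pWK k w : ℝ) ≤ w + Real.logb (3/2) (6 * k + 12) := by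
  have hr0 : (0:ℝ) < (2/3:ℝ)^w := by positivity
  have hr1 : ((2/3:ℝ))^w ≤ 1 := pow_le_one₀ (by norm_num) (by norm_num)
  have h1r : (0:ℝ) < 1 + (2/3:ℝ)^w := by linarith
  have hratio_lb : (3/2:ℝ) ≤ ratio w := by
    rw [ratio, le_div_iff₀ h1r]; linarith
  have hratio_ub : ratio w ≤ 2 := by
    rw [ratio, div_le_iff₀ h1r]; linarith
  have halpha : ∀ p : ℕ, alphaF w (p+1) = (1/(1 + (2/3:ℝ)^w)) * ratio w ^ p := by
    intro p; rw [alphaF]; norm_num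
  have hB : ∀ p : ℕ, (1/2:ℝ) * (3/2)^p ≤ alphaF w (p+1) := by
    intro p; rw [halpha]
    apply mul_le_mul _ (pow_le_pow_left₀ (by norm_num) hratio_lb p) (by positivity) (by positivity)
    rw [div_le_div_iff₀ (by norm_num) h1r]; linarith
  have hA : ∀ p : ℕ, alphaF w (p+1) ≤ 2^p := by
    intro p; rw [halpha]
    calc (1/(1 + (2/3:ℝ)^w)) * ratio w ^ p ≤ 1 * 2^p := by
          apply mul_le_mul _ (pow_le_pow_left₀ (by positivity) hratio_ub p) (by positivity) (by norm_num)
          rw [div_le_one h1r]; linarith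
      _ = 2^p := one_mul _
  -- the candidate upper bound
  set x : ℝ := (w:ℝ) + Real.logb (3/2) (6 * k + 12) with hxdef
  have h6 : (0:ℝ) < 6 * k + 12 := by positivity
  have hlogb_nn : 0 ≤ Real.logb (3/2) (6 * k + 12) := by
    apply Real.logb_nonneg (by norm_num)
    have : (1:ℝ) ≤ 12 := by norm_num
    nlinarith [Nat.cast_nonneg (α := ℝ) k]
  have hx0 : 0 ≤ x := by positivity
  set n : ℕ := ⌊x⌋₊ with hndef
  have hn_le : (n:ℝ) ≤ x := Nat.floor_le hx0
  have hn_gt : x - 1 < (n:ℝ) := by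
    have := Nat.lt_floor_add_one x; linarith
  have hrpow : ((3/2:ℝ)) ^ (x : ℝ) = (3/2:ℝ)^w * (6 * k + 12) := by
    rw [hxdef, Real.rpow_add (by norm_num), Real.rpow_natCast,
      Real.rpow_logb (by norm_num) (by norm_num) h6]
  have hkey : (3/2:ℝ)^w * (6 * k + 12) * (2/3) ≤ (3/2:ℝ)^n := by
    have h1 : ((3/2:ℝ)) ^ (x - 1 : ℝ) ≤ (3/2:ℝ) ^ ((n:ℝ)) :=
      Real.rpow_le_rpow_of_exponent_le (by norm_num) (by linarith)
    rw [Real.rpow_natCast] at h1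
    have h2 : ((3/2:ℝ)) ^ (x - 1 : ℝ) = (3/2:ℝ)^w * (6 * k + 12) * (2/3) := by
      rw [Real.rpow_sub (by norm_num), hrpow, Real.rpow_one]
      ring
    linarith [h2 ▸ h1]
  have hmemn : n ∈ {p : ℕ | betaK k w ≤ alphaF w (p + 1)} := by
    have : betaK k w ≤ (1/2:ℝ) * (3/2)^n := by
      rw [betaK]
      nlinarith [pow_pos (show (0:ℝ) < 3/2 by norm_num) w,
        pow_pos (show (0:ℝ) < 3/2 by norm_num) n]
    exact le_trans this (hB n)
  have hSle : pWK k w ≤ n := Nat.sInf_le hmemn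
  constructor
  · -- lower bound
    have hmem : betaK k w ≤ alphaF w (pWK k w + 1) :=
      Nat.sInf_mem (⟨n, hmemn⟩ : {p : ℕ | betaK k w ≤ alphaF w (p + 1)}.Nonempty)
    have hchain : (2 * (k:ℝ) + 4) * (3/2)^w ≤ 2 ^ (pWK k w) := by
      have := hA (pWK k w)
      rw [betaK] at hmem
      push_cast at hmem ⊢
      linarith
    have hprod : (0:ℝ) < (2 * (k:ℝ) + 4) * (3/2)^w := by positivity
    have hlog := Real.logb_le_logb_of_le (b := 2) (by norm_num) hprod hchain
    rw [Real.logb_mul (by positivity) (by positivity), Real.logb_pow, Real.logb_pow,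
      Real.logb_self_eq_one (by norm_num), mul_one] at hlog
    push_cast at hlog ⊢
    linarith
  · -- upper bound
    calc ((pWK k w : ℝ)) ≤ (n:ℝ) := by exact_mod_cast hSle
      _ ≤ x := hn_le
end

section
/- For all integers k ≥ 1, w ≥ 0 and p ≥ p_{w,k} + 1, γ(w,p) ≥ α(w,p) + k + 4. -/
open SimpleGraph

theorem statement_15 (k w p : ℕ) (hk : 1 ≤ k) (hp : pWK k w + 1 ≤ p) :
    alphaF w p + k + 4 ≤ gammaF w p := by
  set q := (2/3:ℝ)^w with hq
  have hq0 : (0:ℝ) < q := by positivity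
  have hq1 : q ≤ 1 := pow_le_one₀ (by norm_num) (by norm_num)
  have h1q : (0:ℝ) < 1 + q := by linarith
  have hr : (3/2 : ℝ) ≤ ratio w := by
    rw [ratio, le_div_iff₀ h1q]; rw [← hq]; linarith
  have hr1 : (1:ℝ) < ratio w := lt_of_lt_of_le (by norm_num) hr
  have hr1' : (1:ℝ) ≤ ratio w := le_of_lt hr1
  have hb : (2*(k:ℝ) + 4 : ℝ) ≤ betaK k w := by
    rw [betaK]
    have h1 : (1:ℝ) ≤ (3/2:ℝ)^w := one_le_pow₀ (by norm_num)
    nlinarith [(by exact_mod_cast hk : (1:ℝ) ≤ (k:ℝ))]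
  have hne : {n : ℕ | betaK k w ≤ alphaF w (n + 1)}.Nonempty := by
    obtain ⟨n, hn⟩ := pow_unbounded_of_one_lt ((1+q) * betaK k w) hr1
    refine ⟨n, ?_⟩
    simp only [Set.mem_setOf_eq, alphaF, Nat.add_sub_cancel, ← hq]
    rw [one_div_mul_eq_div, le_div_iff₀ h1q]
    nlinarith
  have hmem : betaK k w ≤ alphaF w (pWK k w + 1) := Nat.sInf_mem hne
  have hmono : alphaF w (pWK k w + 1) ≤ alphaF w p := by
    simp only [alphaF, Nat.add_sub_cancel, ← hq]
    have h1 : ratio w ^ (pWK k w) ≤ ratio w ^ (p-1) := by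
      apply pow_le_pow_right₀ hr1'
      omega
    have h' : (0:ℝ) ≤ 1/(1+q) := by positivity
    exact mul_le_mul_of_nonneg_left h1 h'
  have hkey : betaK k w ≤ alphaF w p := le_trans hmem hmono
  set A := ratio w ^ (p-1) with hA
  have hA0 : (0:ℝ) < A := by positivity
  have halpha : alphaF w p = A / (1+q) := by
    rw [alphaF, ← hq, one_div_mul_eq_div]
  have hgamma : gammaF w p = A * ratio w := by
    rw [gammaF, hA, ← pow_succ]
    congr 1; omega
  have hAbig : 2*(k:ℝ) + 4 ≤ A := by
    rw [halpha, le_div_iff₀ h1q] at hkey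
    nlinarith
  have hdiff : A * ratio w - A / (1+q) = A := by
    rw [ratio, ← hq]
    field_simp
    ring
  have hk0 : (0:ℝ) ≤ (k:ℝ) := Nat.cast_nonneg k
  rw [halpha, hgamma]
  linarith
end
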